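/- arXiv:math/0303323 — 10 statements merged into one kernel-verified Lean document; each statement's English description precedes it below -/
import Mathlib

section
/- Let 𝒟 be a set of tournaments on X and d a tournament on X. Then d ∈ maj-cl(𝒟) if and only if there exist a nonempty finite index set J and a family (c_j)_{j∈J} of members of 𝒟 such that for all distinct x, y ∈ X: d x y holds if and only if |{j ∈ J : c_j x y}| > |J|/2. -/
open scoped BigOperators

variable {X : Type*}

/-- A tournament on `X`: irreflexive and, on distinct points, exactly one direction holds. -/
def IsTournament (R : X → X → Prop) : Prop :=
  (∀ x, ¬ R x x) ∧ ∀ x y : X, x ≠ y → (R x y ↔ ¬ R y x)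

/-- Out-degree of `x` in the relation `R`. -/
noncomputable def valT (R : X → X → Prop) (x : X) : ℕ :=
  Set.ncard {y | R x y}

/-- A tournament is balanced if every out-degree equals `(n-1)/2`. -/
def IsBalanced [Fintype X] (R : X → X → Prop) : Prop :=
  ∀ x : X, (valT R x : ℝ) = ((Fintype.card X : ℝ) - 1) / 2

/-- Action of a permutation on a relation. -/
def permAct (π : Equiv.Perm X) (R : X → X → Prop) : X → X → Prop :=
  fun x y => R (π.symm x) (π.symm y)

/-- A set of relations closed under the permutation action. -/
def SymmetricSet (D : Set (X → X → Prop)) : Prop :=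
  ∀ (π : Equiv.Perm X), ∀ R ∈ D, permAct π R ∈ D

/-- The majority closure of a set of tournaments. -/
def majCl [Fintype X] (D : Set (X → X → Prop)) : Set (X → X → Prop) :=
  {d | IsTournament d ∧ ∃ w : (X → X → Prop) → ℝ,
    (∀ c, 0 ≤ w c ∧ w c ≤ 1) ∧
    (∀ c, w c ≠ 0 → c ∈ D) ∧
    (Function.support w).Finite ∧
    (∑ᶠ c, w c) = 1 ∧
    ∀ x y : X, x ≠ y →
      (d x y ↔ 1 / 2 < ∑ᶠ c ∈ {c : X → X → Prop | c ∈ D ∧ c x y}, w c)}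

open Classical in
noncomputable def tOf (d : X → X → Prop) : X → X → ℝ :=
  fun x y => if d x y then 1 else 0

/-- pr-cl: the convex hull of `{t[d] : d ∈ D}`. -/
noncomputable def prCl (D : Set (X → X → Prop)) : Set (X → X → ℝ) :=
  convexHull ℝ (tOf '' D)

/-- `t` is a weighted tournament. -/
def IsWeighted (t : X → X → ℝ) : Prop :=
  ∀ x y : X, x ≠ y → 0 ≤ t x y ∧ t x y ≤ 1 ∧ t y x = 1 - t x y

/-- A weighted tournament is balanced if each row sums to `(n-1)/2`. -/
def BalancedW [Fintype X] (t : X → X → ℝ) : Prop :=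
  ∀ x : X, (∑ᶠ y ∈ {y : X | y ≠ x}, t x y) = ((Fintype.card X : ℝ) - 1) / 2

/-- A tournament is pseudo-balanced if it is dominated by a balanced weighted tournament. -/
def PseudoBalanced [Fintype X] (c : X → X → Prop) : Prop :=
  ∃ t : X → X → ℝ, IsWeighted t ∧ BalancedW t ∧
    ∀ x y : X, x ≠ y → c x y → 1 / 2 < t x y

open Classical in
noncomputable def tConfig (x y : X) (a s0 s1 : ℝ) : X → X → ℝ :=
  fun u v =>
    if u = v then 0
    else if u = x ∧ v = y then a
    else if u = y ∧ v = x then 1 - a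
    else if u = x then s0
    else if v = x then 1 - s0
    else if u = y then s1
    else if v = y then 1 - s1
    else 1 / 2

/-- `Prd_ℓ(𝒟)`. -/
noncomputable def PrdL [Fintype X] (l : ℕ) (D : Set (X → X → Prop)) : Set (ℝ × ℝ) :=
  {p | ∃ c ∈ D, ∃ x y : X, x ≠ y ∧ (c x y ↔ l = 1) ∧
    p.1 = (Set.ncard {z : X | z ≠ x ∧ z ≠ y ∧ c x z} : ℝ) / ((Fintype.card X : ℝ) - 2) ∧
    p.2 = (Set.ncard {z : X | z ≠ x ∧ z ≠ y ∧ c y z} : ℝ) / ((Fintype.card X : ℝ) - 2)}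

/-- `Pr_A(𝒟)`. -/
noncomputable def PrA [Fintype X] (A : Set ℝ) (D : Set (X → X → Prop)) : Set (ℝ × ℝ) :=
  {p | 0 ≤ p.1 ∧ p.1 ≤ 1 ∧ 0 ≤ p.2 ∧ p.2 ≤ 1 ∧
    ∃ x y : X, x ≠ y ∧ ∃ a ∈ A, tConfig x y a p.1 p.2 ∈ prCl D}

/-- `V_ℓ(d)` as a subset of `ℝ²`. -/
noncomputable def Vset [Fintype X] (l : ℕ) (d : X → X → Prop) : Set (ℝ × ℝ) :=
  {p | ∃ x y : X, x ≠ y ∧ (if l = 1 then d x y else d y x) ∧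
    p = ((valT d x : ℝ), (valT d y : ℝ))}

/-- `V*_ℓ(d)`. -/
noncomputable def VstarSet [Fintype X] (l : ℕ) (d : X → X → Prop) : Set (ℝ × ℝ) :=
  {p | ∃ q ∈ Vset l d, p = (q.1 - (l : ℝ), q.2 - (1 - (l : ℝ)))}

open Classical in
noncomputable def tCycle (k : ℕ) (xs : ℕ → X) (a : ℝ) : X → X → ℝ :=
  fun u v =>
    if u = v then 0
    else if ∃ i < k, u = xs i ∧ v = xs ((i + 1) % k) then a
    else if ∃ i < k, v = xs i ∧ u = xs ((i + 1) % k) then 1 - a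
    else 1 / 2

open Classical in
noncomputable def tTriple (x y z : X) : X → X → ℝ :=
  fun u v =>
    if u = v then 0
    else if (u, v) = (x, y) ∨ (u, v) = (y, z) ∨ (u, v) = (z, x) then 1
    else if (u, v) = (y, x) ∨ (u, v) = (z, y) ∨ (u, v) = (x, z) then 0
    else 1 / 2

/-- The dual (reverse) tournament. -/
def dualT (c : X → X → Prop) : X → X → Prop := fun x y => c y x

/-- The symmetric closure (orbit) of a single tournament. -/
def symCl (c : X → X → Prop) : Set (X → X → Prop) :=
  {d | ∃ π : Equiv.Perm X, d = permAct π c}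

/-! Forward direction: scale the weights by a large `N` and round down. Since `d` and every member
of `𝒟` are tournaments, no pair `x ≠ y` receives share exactly `1/2`, so each of the finitely many
coalitions has a positive margin `δ`; rounding loses at most one vote per relation in every
coalition, which is harmless once `N * δ` exceeds the number of relations on `X`.
Backward direction: weight each tournament by its frequency in the family. -/

open Filter Finset

section FloorRounding

variable {ι : Type*} {w : ι → ℝ}

lemma sum_floor_mul_le (hw : ∀ i, 0 ≤ w i) (N : ℕ) (A : Finset ι) :
    ∑ i ∈ A, (⌊N * w i⌋₊ : ℝ) ≤ N * ∑ i ∈ A, w i := by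
  rw [mul_sum]
  exact sum_le_sum fun i _ => Nat.floor_le (mul_nonneg N.cast_nonneg (hw i))

lemma mul_sum_le_sum_floor_mul_add_card [Fintype ι] (N : ℕ) (A : Finset ι) :
    N * ∑ i ∈ A, w i ≤ ∑ i ∈ A, (⌊N * w i⌋₊ : ℝ) + Fintype.card ι :=
  calc N * ∑ i ∈ A, w i ≤ ∑ i ∈ A, ((⌊N * w i⌋₊ : ℝ) + 1) := by
        rw [mul_sum]; exact sum_le_sum fun i _ => (Nat.lt_floor_add_one _).le
    _ = ∑ i ∈ A, (⌊N * w i⌋₊ : ℝ) + #A := by rw [sum_add_distrib, sum_const, nsmul_one]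
    _ ≤ ∑ i ∈ A, (⌊N * w i⌋₊ : ℝ) + Fintype.card ι := by gcongr; exact card_le_univ A

lemma half_lt_sum_iff_half_lt_sum_floor [Fintype ι] (hw0 : ∀ i, 0 ≤ w i)
    (hw1 : ∑ i, w i = 1) {N : ℕ} (A : Finset ι) (hN : Fintype.card ι < N * |∑ i ∈ A, w i - 1 / 2|) :
    1 / 2 < ∑ i ∈ A, w i ↔
      ((∑ i, ⌊N * w i⌋₊ : ℕ) : ℝ) / 2 < ∑ i ∈ A, (⌊N * w i⌋₊ : ℝ) := by
  have hm_le := sum_floor_mul_le hw0 N univ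
  have hm_ge := mul_sum_le_sum_floor_mul_add_card (w := w) N univ
  have ha_le := sum_floor_mul_le hw0 N A
  have ha_ge := mul_sum_le_sum_floor_mul_add_card (w := w) N A
  rw [hw1, mul_one] at hm_le hm_ge
  push_cast
  have hK : (0 : ℝ) ≤ Fintype.card ι := Nat.cast_nonneg _
  constructor
  · intro h
    rw [abs_of_pos (by linarith)] at hN
    linarith
  · intro h
    by_contra! h'
    rw [abs_of_nonpos (by linarith)] at hN
    linarith

theorem exists_nat_weights_half_lt_sum_iff [Fintype ι] (hw0 : ∀ i, 0 ≤ w i)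
    (hw1 : ∑ i, w i = 1) :
    ∃ k : ι → ℕ, 0 < ∑ i, k i ∧ (∀ i, w i = 0 → k i = 0) ∧
      ∀ A : Finset ι, ∑ i ∈ A, w i ≠ 1 / 2 →
        (1 / 2 < ∑ i ∈ A, w i ↔ ((∑ i, k i : ℕ) : ℝ) / 2 < ∑ i ∈ A, (k i : ℝ)) := by
  have hlarge : ∀ A : {A : Finset ι // ∑ i ∈ A, w i ≠ 1 / 2},
      ∀ᶠ N : ℕ in atTop, (Fintype.card ι : ℝ) < N * |∑ i ∈ A.1, w i - 1 / 2| := fun A =>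
    (tendsto_natCast_atTop_atTop.atTop_mul_const
      (abs_pos.2 (sub_ne_zero.2 A.2))).eventually_gt_atTop _
  obtain ⟨N, hN⟩ := (eventually_all.2 hlarge).exists
  have hk A hA := half_lt_sum_iff_half_lt_sum_floor hw0 hw1 A (hN ⟨A, hA⟩)
  refine ⟨fun i => ⌊N * w i⌋₊, ?_, fun i hi => by simp [hi], hk⟩
  -- `0 < ∑ i, k i` because `univ` carries weight `1 > 1 / 2`
  have := (hk univ (by rw [hw1]; norm_num)).1 (by rw [hw1]; norm_num)
  rw [← Nat.cast_sum] at this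
  exact_mod_cast (by linarith : (0 : ℝ) < ((∑ i, ⌊N * w i⌋₊ : ℕ) : ℝ))

end FloorRounding

lemma exists_fin_family_card_filter_mem {ι : Type*} [Fintype ι] [DecidableEq ι] (k : ι → ℕ) :
    ∃ cs : Fin (∑ i, k i) → ι, ∀ A : Finset ι, #{j | cs j ∈ A} = ∑ i ∈ A, k i := by
  let e : (Σ i, Fin (k i)) ≃ Fin (∑ i, k i) := Fintype.equivFinOfCardEq (by simp)
  refine ⟨fun j => (e.symm j).1, fun A => ?_⟩
  calc #{j | (e.symm j).1 ∈ A} = #{s : Σ i, Fin (k i) | s.1 ∈ A} :=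
        card_equiv e.symm fun j => by simp
    _ = #(A.sigma fun i => univ) := by congr 1; ext ⟨i, j⟩; simp
    _ = ∑ i ∈ A, k i := by simp

lemma finsum_mem_setOf_and_eq_sum_filter {ι : Type*} [Fintype ι] {D : Set ι} {w : ι → ℝ}
    (hw : ∀ c, w c ≠ 0 → c ∈ D) (p : ι → Prop) [DecidablePred p] :
    ∑ᶠ c ∈ {c | c ∈ D ∧ p c}, w c = ∑ c with p c, w c := by
  rw [← finsum_mem_coe_finset]
  refine finsum_mem_inter_support_eq' w _ _ fun c hc => ?_
  simp [hw c hc]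

lemma sum_filter_add_sum_filter_swap [Fintype (X → X → Prop)] {D : Set (X → X → Prop)}
    (hT : ∀ c ∈ D, IsTournament c) {w : (X → X → Prop) → ℝ} (hw : ∀ c, w c ≠ 0 → c ∈ D)
    {x y : X} (hxy : x ≠ y) [DecidablePred fun c : X → X → Prop => c x y]
    [DecidablePred fun c : X → X → Prop => c y x] :
    ∑ c with c x y, w c + ∑ c with c y x, w c = ∑ c, w c := by
  rw [← sum_filter_add_sum_filter_not univ (fun c => c x y)]
  congr 1
  rw [sum_filter, sum_filter]
  refine sum_congr rfl fun c _ => ?_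
  by_cases hc : w c = 0
  · simp [hc]
  · simp only [((hT c (hw c hc)).2 y x hxy.symm)]

lemma exists_fin_family_of_mem_majCl [Fintype X] {D : Set (X → X → Prop)}
    (hT : ∀ c ∈ D, IsTournament c) {d : X → X → Prop} (hd : d ∈ majCl D) :
    ∃ m : ℕ, 0 < m ∧ ∃ cs : Fin m → (X → X → Prop), (∀ j, cs j ∈ D) ∧
      ∀ x y : X, x ≠ y → (d x y ↔ (m : ℝ) / 2 < (Set.ncard {j : Fin m | cs j x y} : ℝ)) := by
  classical
  let _ := Fintype.ofFinite (X → X → Prop)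
  obtain ⟨hd, w, hw01, hwD, -, hwsum, hmaj⟩ := hd
  rw [finsum_eq_sum_of_fintype] at hwsum
  simp only [finsum_mem_setOf_and_eq_sum_filter hwD] at hmaj
  have hne : ∀ x y, x ≠ y → ∑ c with c x y, w c ≠ 1 / 2 := by
    intro x y hxy h
    have hsum := sum_filter_add_sum_filter_swap hT hwD hxy
    by_cases hdxy : d x y
    · linarith [(hmaj x y hxy).1 hdxy]
    · linarith [(hmaj y x hxy.symm).1 ((hd.2 y x hxy.symm).2 hdxy)]
  obtain ⟨k, hkpos, hk0, hk⟩ := exists_nat_weights_half_lt_sum_iff (fun c => (hw01 c).1) hwsum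
  obtain ⟨cs, hcs⟩ := exists_fin_family_card_filter_mem k
  refine ⟨_, hkpos, cs, fun j => hwD _ fun h => ?_, fun x y hxy => ?_⟩
  · have := hcs {cs j}
    rw [sum_singleton, hk0 _ h, card_eq_zero, filter_eq_empty_iff] at this
    exact this (mem_univ j) (mem_singleton_self _)
  · rw [hmaj x y hxy, hk _ (hne x y hxy), ← Nat.cast_sum, ← hcs (univ.filter fun c => c x y)]
    simp [Set.ncard_eq_toFinset_card']

lemma mem_majCl_of_fin_family [Fintype X] {D : Set (X → X → Prop)} {d : X → X → Prop}
    (hd : IsTournament d) {m : ℕ} (hm : 0 < m) {cs : Fin m → (X → X → Prop)}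
    (hcsD : ∀ j, cs j ∈ D)
    (hcount : ∀ x y : X, x ≠ y → (d x y ↔ (m : ℝ) / 2 < (Set.ncard {j | cs j x y} : ℝ))) :
    d ∈ majCl D := by
  classical
  let _ := Fintype.ofFinite (X → X → Prop)
  have hm' : (0 : ℝ) < m := Nat.cast_pos.2 hm
  set w : (X → X → Prop) → ℝ := fun c => (#{j | cs j = c} : ℝ) / m with hw
  have hwD : ∀ c, w c ≠ 0 → c ∈ D := fun c hc => by
    by_contra hcD
    refine hc ?_
    simp only [hw, div_eq_zero_iff, Nat.cast_eq_zero, card_eq_zero, filter_eq_empty_iff]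
    exact Or.inl fun j _ hj => hcD (hj ▸ hcsD j)
  have hsum : ∀ A, ∑ c ∈ A, w c = (#{j | cs j ∈ A} : ℝ) / m := fun A => by
    rw [hw, ← sum_div, ← Nat.cast_sum, sum_card_fiberwise_eq_card_filter]
  refine ⟨hd, w, fun c => ⟨by positivity, ?_⟩, hwD, Set.toFinite _, ?_, fun x y hxy => ?_⟩
  · exact div_le_one_of_le₀ (by exact_mod_cast (card_filter_le _ _).trans (card_fin m).le) hm'.le
  · rw [finsum_eq_sum_of_fintype, hsum]
    simp [hm'.ne']
  · rw [finsum_mem_setOf_and_eq_sum_filter hwD, hsum, hcount x y hxy, lt_div_iff₀ hm',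
      one_div_mul_eq_div]
    simp [Set.ncard_eq_toFinset_card']

theorem stmt2_general [Fintype X]
    (D : Set (X → X → Prop)) (hT : ∀ c ∈ D, IsTournament c)
    (d : X → X → Prop) (hd : IsTournament d) :
    d ∈ majCl D ↔
      ∃ m : ℕ, 0 < m ∧ ∃ cs : Fin m → (X → X → Prop),
        (∀ j, cs j ∈ D) ∧
        ∀ x y : X, x ≠ y →
          (d x y ↔ (m : ℝ) / 2 < (Set.ncard {j : Fin m | cs j x y} : ℝ)) :=
  ⟨exists_fin_family_of_mem_majCl hT, fun ⟨_, hm, _, hcsD, hcount⟩ =>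
    mem_majCl_of_fin_family hd hm hcsD hcount⟩

theorem stmt2 [Fintype X] (hcard : 3 ≤ Fintype.card X)
    (D : Set (X → X → Prop)) (hT : ∀ c ∈ D, IsTournament c)
    (d : X → X → Prop) (hd : IsTournament d) :
    d ∈ majCl D ↔
      ∃ m : ℕ, 0 < m ∧ ∃ cs : Fin m → (X → X → Prop),
        (∀ j, cs j ∈ D) ∧
        ∀ x y : X, x ≠ y →
          (d x y ↔ (m : ℝ) / 2 < (Set.ncard {j : Fin m | cs j x y} : ℝ)) :=
  stmt2_general D hT d hd
end

section
/- Let 𝔇 be a nonempty symmetric set of tournaments on X. Suppose there exist distinct x, y ∈ X and a weighted tournament t ∈ pr-cl(𝔇) such that t(x,y) > 1/2 and t(u,v) = 1/2 for all distinct u, v ∈ X with {u,v} ≠ {x,y}. Then maj-cl(𝔇) is the set of all tournaments on X. -/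
open scoped BigOperators

variable {X : Type*}

/-! Fix a tournament `d`. For each arc `(a, b)` of `d` choose a permutation `π` with
`π x = a`, `π y = b`; the copy `π • t` is `t x y > 1/2` on the arc `(a, b)` and `1/2` on every
pair other than `{a, b}`. Since `𝒟` is symmetric, `pr-cl(𝒟)` is closed under the action, and being
convex it contains the average of these copies over all arcs of `d`. That average exceeds `1/2`
on every arc of `d`, and any element of `pr-cl(𝒟)` exceeding `1/2` on the arcs of `d` (hence
below `1/2` on the reversed arcs) exhibits `d` as a weighted majority of tournaments of `𝒟`. -/

theorem Equiv.Perm.exists_apply_eq_and_apply_eq [DecidableEq X] {x y a b : X} (hxy : x ≠ y)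
    (hab : a ≠ b) : ∃ π : Equiv.Perm X, π x = a ∧ π y = b := by
  set y' := Equiv.swap x a y
  have hy' : y' ≠ a := fun h ↦
    hxy <| (Equiv.swap x a).injective (h.trans (Equiv.swap_apply_left x a).symm).symm
  exact ⟨(Equiv.swap x a).trans (Equiv.swap y' b),
    by simp [Equiv.swap_apply_of_ne_of_ne hy'.symm hab], by simp [y']⟩

def permActWeighted (π : Equiv.Perm X) (t : X → X → ℝ) : X → X → ℝ :=
  fun a b => t (π.symm a) (π.symm b)

theorem tOf_permAct (π : Equiv.Perm X) (c : X → X → Prop) :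
    tOf (permAct π c) = permActWeighted π (tOf c) := rfl

theorem permActWeighted_mem_prCl {D : Set (X → X → Prop)} (hD : SymmetricSet D)
    (π : Equiv.Perm X) {t : X → X → ℝ} (ht : t ∈ prCl D) : permActWeighted π t ∈ prCl D := by
  let L : (X → X → ℝ) →ₗ[ℝ] X → X → ℝ :=
    { toFun := permActWeighted π, map_add' := fun _ _ ↦ rfl, map_smul' := fun _ _ ↦ rfl }
  have hL : L '' (tOf '' D) ⊆ tOf '' D := by
    rintro _ ⟨_, ⟨c, hc, rfl⟩, rfl⟩
    exact ⟨permAct π c, hD π c hc, tOf_permAct π c⟩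
  have : L t ∈ L '' prCl D := Set.mem_image_of_mem L ht
  rw [prCl, L.image_convexHull] at this
  exact convexHull_mono hL this

theorem apply_add_apply_swap_of_mem_prCl {D : Set (X → X → Prop)}
    (hD : ∀ c ∈ D, IsTournament c) {t : X → X → ℝ} (ht : t ∈ prCl D) {a b : X} (hab : a ≠ b) :
    t a b + t b a = 1 := by
  suffices prCl D ⊆ {t | t a b + t b a = 1} from this ht
  refine convexHull_min ?_ ?_
  · rintro _ ⟨c, hc, rfl⟩
    by_cases h : c a b
    · simp [tOf, h, ((hD c hc).2 a b hab).1 h]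
    · simp [tOf, h, not_not.1 (mt ((hD c hc).2 a b hab).2 h)]
  · exact convex_hyperplane ⟨fun _ _ ↦ by simp only [Pi.add_apply]; ring,
      fun _ _ ↦ by simp only [Pi.smul_apply, smul_eq_mul]; ring⟩ 1

open Classical in
theorem exists_weights_of_mem_prCl [Fintype X] {D : Set (X → X → Prop)} {t : X → X → ℝ}
    (ht : t ∈ prCl D) :
    ∃ w : (X → X → Prop) → ℝ, (∀ c, 0 ≤ w c) ∧ (∀ c, w c ≠ 0 → c ∈ D) ∧
      ∑ c, w c = 1 ∧ t = ∑ c, w c • tOf c := by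
  suffices prCl D ⊆ {t | ∃ w : (X → X → Prop) → ℝ, (∀ c, 0 ≤ w c) ∧ (∀ c, w c ≠ 0 → c ∈ D) ∧
      ∑ c, w c = 1 ∧ t = ∑ c, w c • tOf c} from this ht
  refine convexHull_min ?_ ?_
  · rintro _ ⟨c, hc, rfl⟩
    refine ⟨Pi.single c 1, fun c' ↦ ?_, fun c' hc' ↦ ?_, by simp, by simp⟩
    · by_cases h : c' = c <;> simp [h]
    · by_cases h : c' = c
      · exact h ▸ hc
      · simp [h] at hc'
  · rintro _ ⟨w₁, hw₁, hD₁, hs₁, rfl⟩ _ ⟨w₂, hw₂, hD₂, hs₂, rfl⟩ α β hα hβ hαβ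
    refine ⟨α • w₁ + β • w₂, fun c ↦ ?_, fun c hc ↦ ?_, ?_, ?_⟩
    · simp only [Pi.add_apply, Pi.smul_apply, smul_eq_mul]
      have := hw₁ c; have := hw₂ c; positivity
    · by_contra hcD
      simp [not_imp_comm.1 (hD₁ c) hcD, not_imp_comm.1 (hD₂ c) hcD] at hc
    · simp [Finset.sum_add_distrib, ← Finset.mul_sum, hs₁, hs₂, hαβ]
    · simp [add_smul, mul_smul, Finset.sum_add_distrib, Finset.smul_sum]

theorem mem_majCl_of_mem_prCl [Fintype X] {D : Set (X → X → Prop)}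
    (hD : ∀ c ∈ D, IsTournament c) {t : X → X → ℝ} (ht : t ∈ prCl D)
    {d : X → X → Prop} (hd : IsTournament d) (hdt : ∀ a b, d a b → 1 / 2 < t a b) :
    d ∈ majCl D := by
  classical
  obtain ⟨w, hw, hwD, hw₁, htw⟩ := exists_weights_of_mem_prCl ht
  have arc : ∀ a b, ∑ᶠ c ∈ {c : X → X → Prop | c ∈ D ∧ c a b}, w c = t a b := by
    intro a b
    rw [finsum_mem_def, finsum_eq_sum_of_fintype, htw, Finset.sum_apply, Finset.sum_apply]
    refine Finset.sum_congr rfl fun c _ ↦ ?_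
    by_cases hc : c ∈ D
    · by_cases h : c a b <;> simp [tOf, Set.indicator, hc, h]
    · simp [Set.indicator, hc, not_imp_comm.1 (hwD c) hc]
  refine ⟨hd, w, fun c ↦ ⟨hw c, ?_⟩, hwD, Set.toFinite _, by rwa [finsum_eq_sum_of_fintype],
    fun a b hab ↦ ?_⟩
  · exact hw₁ ▸ Finset.single_le_sum (fun c _ ↦ hw c) (Finset.mem_univ c)
  · rw [arc]
    refine ⟨hdt a b, fun h ↦ not_not.1 fun hn ↦ ?_⟩
    have := hdt b a ((hd.2 b a hab.symm).2 hn)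
    linarith [apply_add_apply_swap_of_mem_prCl hD ht hab]

theorem Convex.expect_mem {E ι : Type*} [AddCommGroup E] [Module ℝ E] [Module ℚ≥0 E]
    [IsScalarTower ℚ≥0 ℝ E] {s : Set E} (hs : Convex ℝ s) {P : Finset ι} (hP : P.Nonempty)
    {z : ι → E} (hz : ∀ i ∈ P, z i ∈ s) : 𝔼 i ∈ P, z i ∈ s := by
  rw [Finset.expect, ← NNRat.cast_smul_eq_nnqsmul ℝ, Finset.smul_sum]
  exact hs.sum_mem (fun _ _ ↦ by positivity) (by simp [hP.card_ne_zero]) hz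

open Classical in
noncomputable def arcs [Fintype X] (d : X → X → Prop) : Finset (X × X) :=
  Finset.univ.filter fun p ↦ d p.1 p.2

@[simp]
theorem mem_arcs [Fintype X] {d : X → X → Prop} {p : X × X} : p ∈ arcs d ↔ d p.1 p.2 := by
  simp [arcs]

theorem IsTournament.arcs_nonempty [Fintype X] {d : X → X → Prop} (hd : IsTournament d)
    {x y : X} (hxy : x ≠ y) : (arcs d).Nonempty := by
  by_cases h : d x y
  · exact ⟨(x, y), mem_arcs.2 h⟩
  · exact ⟨(y, x), mem_arcs.2 ((hd.2 y x hxy.symm).2 h)⟩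

theorem IsTournament.ne_of_mem_arcs [Fintype X] {d : X → X → Prop} (hd : IsTournament d)
    {p : X × X} (hp : p ∈ arcs d) : p.1 ≠ p.2 := by
  obtain ⟨a, b⟩ := p
  rintro (rfl : a = b)
  exact hd.1 a (mem_arcs.1 hp)

theorem IsTournament.permActWeighted_apply [DecidableEq X] {d : X → X → Prop}
    (hd : IsTournament d) {x y : X} {t : X → X → ℝ}
    (ht : ∀ u v : X, u ≠ v → ({u, v} : Set X) ≠ {x, y} → t u v = 1 / 2)
    {π : Equiv.Perm X} {p : X × X} (hp : d p.1 p.2) (hπ : (π x, π y) = p)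
    {a b : X} (hab : d a b) :
    permActWeighted π t a b = if p = (a, b) then t x y else 1 / 2 := by
  subst hπ
  split_ifs with h
  · obtain ⟨hx, hy⟩ := Prod.ext_iff.1 h
    rw [permActWeighted, (Equiv.symm_apply_eq _).2 hx.symm, (Equiv.symm_apply_eq _).2 hy.symm]
  · have hab' : a ≠ b := fun h ↦ hd.1 a (h ▸ hab)
    refine ht _ _ (π.symm.injective.ne hab') fun hpair ↦ ?_
    obtain ⟨rfl, rfl⟩ | ⟨rfl, rfl⟩ :=
      Set.pair_eq_pair_iff.1 (by simpa [Set.image_pair] using congrArg (π '' ·) hpair)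
    · exact h rfl
    · exact (hd.2 _ _ hab').1 hab hp

theorem stmt3_general [Fintype X]
    (D : Set (X → X → Prop)) (hT : ∀ c ∈ D, IsTournament c)
    (hsym : SymmetricSet D)
    (x y : X) (hxy : x ≠ y) (t : X → X → ℝ) (ht : t ∈ prCl D)
    (htxy : 1 / 2 < t x y)
    (hother : ∀ u v : X, u ≠ v → ({u, v} : Set X) ≠ ({x, y} : Set X) → t u v = 1 / 2) :
    majCl D = {c : X → X → Prop | IsTournament c} := by
  refine Set.Subset.antisymm (fun d hd ↦ hd.1) fun d (hd : IsTournament d) ↦ ?_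
  classical
  choose! π hπ using fun p : X × X ↦
    Equiv.Perm.exists_apply_eq_and_apply_eq (a := p.1) (b := p.2) hxy
  refine mem_majCl_of_mem_prCl hT ((convex_convexHull ℝ _).expect_mem (hd.arcs_nonempty hxy)
    fun p _ ↦ permActWeighted_mem_prCl hsym (π p) ht) hd fun a b hab ↦ ?_
  have value : ∀ p ∈ arcs d,
      permActWeighted (π p) t a b = if p = (a, b) then t x y else 1 / 2 := fun p hp ↦
    hd.permActWeighted_apply hother (mem_arcs.1 hp)
      (Prod.ext_iff.2 (hπ p (hd.ne_of_mem_arcs hp))) hab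
  rw [Finset.expect_apply, Finset.expect_apply]
  refine Finset.lt_expect (fun p hp ↦ ?_) ⟨(a, b), mem_arcs.2 hab, ?_⟩
  · rw [value p hp]
    split_ifs
    exacts [htxy.le, le_rfl]
  · rwa [value _ (mem_arcs.2 hab), if_pos rfl]

theorem stmt3 [Fintype X] (hcard : 3 ≤ Fintype.card X)
    (D : Set (X → X → Prop)) (hne : D.Nonempty) (hT : ∀ c ∈ D, IsTournament c)
    (hsym : SymmetricSet D)
    (x y : X) (hxy : x ≠ y) (t : X → X → ℝ) (ht : t ∈ prCl D)
    (htxy : 1 / 2 < t x y)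
    (hother : ∀ u v : X, u ≠ v → ({u, v} : Set X) ≠ ({x, y} : Set X) → t u v = 1 / 2) :
    majCl D = {c : X → X → Prop | IsTournament c} :=
  stmt3_general D hT hsym x y hxy t ht htxy hother
end

section
/- Let 𝔇 be a nonempty symmetric set of tournaments on X and suppose maj-cl(𝔇) contains every tournament on X. Then for every pair of distinct x, y ∈ X there exists a weighted tournament t ∈ pr-cl(𝔇) such that t(x,y) > 1/2 and t(u,v) = 1/2 for all distinct u, v ∈ X with {u,v} ≠ {x,y}. -/
open scoped BigOperators

variable {X : Type*}

/-! Fix `z ∉ {x, y}`. A tournament that orients `x → y` and ranks each of `x`, `y` above or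
below all other points lies in the majority closure, so some `t ∈ pr-cl(𝒟)` exceeds `1/2`
exactly on its edges. Averaging `t` over the permutations fixing `x` and `y` keeps it in the
symmetric convex set `pr-cl(𝒟)`, makes the rows of `x` and `y` constant off `{x, y}` and all
other entries `1/2`. The four choices of sides realise all four sign patterns of
`(t(x,z) - 1/2, t(y,z) - 1/2)` with `t(x,y) > 1/2`, and a convex combination of them kills both
coordinates. -/

open Set Equiv

lemma isTournament_lt_comp {α : Type*} [LinearOrder α] {f : X → α} (hf : Function.Injective f) :
    IsTournament (fun u v => f u < f v) :=
  ⟨fun _ => lt_irrefl _, fun _ _ huv => ⟨lt_asymm, (hf.ne huv).lt_or_gt.resolve_right⟩⟩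

def orientEdge (x y : X) (d : X → X → Prop) : X → X → Prop := fun u v =>
  (u = x ∧ v = y) ∨ (¬ (u = y ∧ v = x) ∧ ¬ (u = x ∧ v = y) ∧ d u v)

lemma orientEdge_apply_of_ne {x y a w : X} (d : X → X → Prop) (hwx : w ≠ x) (hwy : w ≠ y) :
    orientEdge x y d a w ↔ d a w := by
  simp [orientEdge, hwx, hwy]

lemma IsTournament.orientEdge {x y : X} (hxy : x ≠ y) {d : X → X → Prop} (hd : IsTournament d) :
    IsTournament (orientEdge x y d) := by
  refine ⟨fun u h => ?_, fun u v huv => ?_⟩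
  · rcases h with ⟨rfl, rfl⟩ | ⟨-, -, h⟩
    exacts [hxy rfl, hd.1 u h]
  · have hduv := hd.2 u v huv
    unfold _root_.orientEdge
    by_cases h₁ : u = x ∧ v = y
    · obtain ⟨rfl, rfl⟩ := h₁
      simp [hxy]
    · by_cases h₂ : u = y ∧ v = x
      · obtain ⟨rfl, rfl⟩ := h₂
        simp [hxy]
      · tauto

lemma exists_tournament_pattern {x y : X} (hxy : x ≠ y) (p q : Prop) :
    ∃ d, IsTournament d ∧ d x y ∧ ∀ w ∉ ({x, y} : Set X), (d x w ↔ p) ∧ (d y w ↔ q) := by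
  classical
  let : LinearOrder X := IsWellOrder.linearOrder WellOrderingRel
  let level : X → ℤ := fun u =>
    if u = x then (if p then -1 else 1) else if u = y then (if q then -1 else 1) else 0
  let key : X → ℤ ×ₗ X := fun u => toLex (level u, u)
  have hkey : Function.Injective key := fun u v h => congrArg (fun k => (ofLex k).2) h
  refine ⟨orientEdge x y (fun u v => key u < key v),
    (isTournament_lt_comp hkey).orientEdge hxy, Or.inl ⟨rfl, rfl⟩, fun w hw => ?_⟩
  obtain ⟨hwx, hwy⟩ : w ≠ x ∧ w ≠ y := by simpa using hw
  simp only [orientEdge_apply_of_ne _ hwx hwy, key, level, Prod.Lex.toLex_lt_toLex, hwx, hwy,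
    hxy.symm, if_true, if_false]
  constructor <;> split_ifs <;> simp_all

lemma apply_swap_of_mem_prCl {D : Set (X → X → Prop)} (hT : ∀ c ∈ D, IsTournament c)
    {t : X → X → ℝ} (ht : t ∈ prCl D) {u v : X} (huv : u ≠ v) : t v u = 1 - t u v := by
  suffices prCl D ⊆ {t | ∀ u v : X, u ≠ v → t v u = 1 - t u v} from this ht u v huv
  refine convexHull_min ?_ ?_
  · rintro _ ⟨c, hc, rfl⟩ u v huv
    by_cases h : c u v
    · simp [tOf, h, ((hT c hc).2 u v huv).1 h]
    · simp [tOf, h, not_not.1 (mt ((hT c hc).2 u v huv).2 h)]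
  · intro p hp q hq a b _ _ hab u v huv
    simp only [Pi.add_apply, Pi.smul_apply, smul_eq_mul, hp u v huv, hq u v huv]
    linear_combination hab

lemma exists_mem_prCl_of_mem_majCl [Fintype X] {D : Set (X → X → Prop)} {d : X → X → Prop}
    (hd : d ∈ majCl D) : ∃ t ∈ prCl D, ∀ u v : X, u ≠ v → (d u v ↔ 1 / 2 < t u v) := by
  classical
  obtain ⟨-, w, hw01, hwD, hfin, hsum, hmaj⟩ := hd
  set s := hfin.toFinset
  have hsD : ∀ c ∈ s, c ∈ D := fun c hc => hwD c (hfin.mem_toFinset.1 hc)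
  refine ⟨∑ c ∈ s, w c • tOf c, ?_, fun u v huv => ?_⟩
  · refine (convex_convexHull ℝ _).sum_mem (fun c _ => (hw01 c).1) ?_
      fun c hc => subset_convexHull ℝ _ ⟨c, hsD c hc, rfl⟩
    rwa [finsum_eq_sum w hfin] at hsum
  · rw [hmaj u v huv, finsum_mem_eq_sum_filter w _ hfin, Finset.sum_filter]
    simp only [Finset.sum_apply, Pi.smul_apply, smul_eq_mul, tOf]
    congr! 2 with c hc
    simp [hsD c hc]

lemma comp_perm_mem_prCl {D : Set (X → X → Prop)} (hsym : SymmetricSet D) (π : Perm X)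
    {t : X → X → ℝ} (ht : t ∈ prCl D) : (fun u v => t (π⁻¹ u) (π⁻¹ v)) ∈ prCl D := by
  suffices prCl D ⊆ (fun t u v => t (π⁻¹ u) (π⁻¹ v)) ⁻¹' prCl D from this ht
  refine convexHull_min ?_ ((convex_convexHull ℝ _).is_linear_preimage
    ⟨fun _ _ => rfl, fun _ _ => rfl⟩)
  rintro _ ⟨c, hc, rfl⟩
  exact subset_convexHull ℝ _ ⟨permAct π c, hsym π c hc, rfl⟩

section Average

variable (G : Subgroup (Perm X))

def IsPermInvariant (t : X → X → ℝ) : Prop :=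
  ∀ σ ∈ G, ∀ u v, t (σ u) (σ v) = t u v

lemma convex_setOf_isPermInvariant : Convex ℝ {t : X → X → ℝ | IsPermInvariant G t} := by
  intro p hp q hq a b _ _ _ σ hσ u v
  simp [hp σ hσ, hq σ hσ]

variable [Fintype G]

noncomputable def groupAverage (t : X → X → ℝ) : X → X → ℝ :=
  ∑ g : G, (Fintype.card G : ℝ)⁻¹ • fun u v => t ((g : Perm X)⁻¹ u) ((g : Perm X)⁻¹ v)

lemma groupAverage_apply (t : X → X → ℝ) (u v : X) :
    groupAverage G t u v =
      (Fintype.card G : ℝ)⁻¹ * ∑ g : G, t ((g : Perm X)⁻¹ u) ((g : Perm X)⁻¹ v) := by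
  simp [groupAverage, Finset.sum_apply, Finset.mul_sum]

lemma groupAverage_mem_prCl {D : Set (X → X → Prop)} (hsym : SymmetricSet D) {t : X → X → ℝ}
    (ht : t ∈ prCl D) : groupAverage G t ∈ prCl D :=
  (convex_convexHull ℝ _).sum_mem (fun _ _ => by positivity) (by simp)
    fun g _ => comp_perm_mem_prCl hsym g ht

lemma isPermInvariant_groupAverage (t : X → X → ℝ) : IsPermInvariant G (groupAverage G t) := by
  intro σ hσ u v
  simp only [groupAverage_apply]
  congr 1
  rw [← Equiv.sum_comp (Equiv.mulLeft (⟨σ, hσ⟩ : G))]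
  simp [mul_inv_rev]

lemma lt_groupAverage_apply {t : X → X → ℝ} {c : ℝ} {u v : X}
    (h : ∀ g ∈ G, c < t (g⁻¹ u) (g⁻¹ v)) : c < groupAverage G t u v := by
  have hcard : (0 : ℝ) < Fintype.card G := by exact_mod_cast Fintype.card_pos
  rw [groupAverage_apply, lt_inv_mul_iff₀ hcard]
  calc (Fintype.card G : ℝ) * c = ∑ _g : G, c := by simp
    _ < _ := Finset.sum_lt_sum_of_nonempty Finset.univ_nonempty fun g _ => h g g.2

end Average

lemma swap_mem_fixingSubgroup [DecidableEq X] {s : Set X} {a b : X} (ha : a ∉ s) (hb : b ∉ s) :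
    swap a b ∈ fixingSubgroup (Perm X) s :=
  (mem_fixingSubgroup_iff (Perm X)).2 fun _ hc =>
    swap_apply_of_ne_of_ne (ne_of_mem_of_not_mem hc ha) (ne_of_mem_of_not_mem hc hb)

lemma eq_half_of_isPermInvariant [DecidableEq X] {x y z : X} {t : X → X → ℝ}
    (hanti : ∀ u v, u ≠ v → t v u = 1 - t u v)
    (hinv : IsPermInvariant (fixingSubgroup (Perm X) {x, y}) t)
    (hz : z ∉ ({x, y} : Set X)) (hxz : t x z = 1 / 2) (hyz : t y z = 1 / 2)
    {u v : X} (huv : u ≠ v) (hne : ({u, v} : Set X) ≠ {x, y}) : t u v = 1 / 2 := by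
  have hswap : ∀ {a b : X}, a ∉ ({x, y} : Set X) → b ∉ ({x, y} : Set X) → ∀ c d,
      t (swap a b c) (swap a b d) = t c d :=
    fun ha hb => hinv _ (swap_mem_fixingSubgroup ha hb)
  have hrow : ∀ a ∈ ({x, y} : Set X), ∀ w ∉ ({x, y} : Set X), t a w = 1 / 2 ∧ t w a = 1 / 2 := by
    intro a ha w hw
    have haw : t a w = 1 / 2 := by
      have h := hswap hz hw a z
      rw [swap_apply_of_ne_of_ne (ne_of_mem_of_not_mem ha hz) (ne_of_mem_of_not_mem ha hw),
        swap_apply_left] at h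
      rcases ha with rfl | rfl
      exacts [h.trans hxz, h.trans hyz]
    refine ⟨haw, ?_⟩
    rw [hanti a w (ne_of_mem_of_not_mem ha hw), haw]
    norm_num
  by_cases hu : u ∈ ({x, y} : Set X) <;> by_cases hv : v ∈ ({x, y} : Set X)
  · simp only [mem_insert_iff, mem_singleton_iff] at hu hv
    rcases hu with rfl | rfl <;> rcases hv with rfl | rfl <;> simp_all [pair_comm]
  · exact (hrow u hu v hv).1
  · exact (hrow v hv u hu).2
  · have h := hswap hu hv v u
    rw [swap_apply_left, swap_apply_right] at h
    linarith [hanti u v huv]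

section Planar

variable {E : Type*} [AddCommGroup E] [Module ℝ E]

lemma Convex.exists_apply_eq_and_apply_mem {S : Set E} (hS : Convex ℝ S) (f g : E →ᵃ[ℝ] ℝ)
    {I : Set ℝ} (hI : Convex ℝ I) {p q : E} (hp : p ∈ S) (hq : q ∈ S) {a : ℝ}
    (hpa : f p ≤ a) (hqa : a ≤ f q) (hpI : g p ∈ I) (hqI : g q ∈ I) :
    ∃ r ∈ S, f r = a ∧ g r ∈ I := by
  obtain ⟨r, hr, hra⟩ : a ∈ f '' segment ℝ p q := by
    rw [image_segment, segment_eq_Icc (hpa.trans hqa)]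
    exact ⟨hpa, hqa⟩
  refine ⟨r, hS.segment_subset hp hq hr, hra, hI.segment_subset hpI hqI ?_⟩
  rw [← image_segment]
  exact mem_image_of_mem g hr

lemma Convex.exists_apply_eq_of_quadrants {S : Set E} (hS : Convex ℝ S) (f g : E →ᵃ[ℝ] ℝ)
    {a b : ℝ} (hquad : ∀ P Q : Prop, ∃ s ∈ S,
      (P → a < f s) ∧ (¬P → f s < a) ∧ (Q → b < g s) ∧ (¬Q → g s < b)) :
    ∃ r ∈ S, f r = a ∧ g r = b := by
  obtain ⟨p₁, hp₁, hf₁, -, hg₁, -⟩ := hquad True True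
  obtain ⟨p₂, hp₂, -, hf₂, hg₂, -⟩ := hquad False True
  obtain ⟨r₁, hr₁, hfr₁, hgr₁⟩ := hS.exists_apply_eq_and_apply_mem f g (convex_Ioi b) hp₂ hp₁
    (hf₂ not_false).le (hf₁ trivial).le (hg₂ trivial) (hg₁ trivial)
  obtain ⟨p₃, hp₃, hf₃, -, -, hg₃⟩ := hquad True False
  obtain ⟨p₄, hp₄, -, hf₄, -, hg₄⟩ := hquad False False
  obtain ⟨r₂, hr₂, hfr₂, hgr₂⟩ := hS.exists_apply_eq_and_apply_mem f g (convex_Iio b) hp₄ hp₃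
    (hf₄ not_false).le (hf₃ trivial).le (hg₄ not_false) (hg₃ not_false)
  obtain ⟨r, hr, hgr, hfr⟩ := hS.exists_apply_eq_and_apply_mem g f (convex_singleton a)
    hr₂ hr₁ hgr₂.le hgr₁.le hfr₂ hfr₁
  exact ⟨r, hr, hfr, hgr⟩

end Planar

lemma exists_isPermInvariant_quadrant [Fintype X] {D : Set (X → X → Prop)}
    (hT : ∀ c ∈ D, IsTournament c) (hsym : SymmetricSet D)
    (hall : ∀ c : X → X → Prop, IsTournament c → c ∈ majCl D)
    {x y z : X} (hxy : x ≠ y) (hz : z ∉ ({x, y} : Set X)) (p q : Prop) :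
    ∃ t ∈ {t | t ∈ prCl D ∧ IsPermInvariant (fixingSubgroup (Perm X) {x, y}) t ∧ 1 / 2 < t x y},
      (p → 1 / 2 < t x z) ∧ (¬p → t x z < 1 / 2) ∧ (q → 1 / 2 < t y z) ∧ (¬q → t y z < 1 / 2) := by
  classical
  set G := fixingSubgroup (Perm X) ({x, y} : Set X)
  obtain ⟨d, hd, hdxy, hrow⟩ := exists_tournament_pattern hxy p q
  obtain ⟨t, htD, ht⟩ := exists_mem_prCl_of_mem_majCl (hall d hd)
  set A := groupAverage G t
  have hAD : A ∈ prCl D := groupAverage_mem_prCl G hsym htD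
  have hA : ∀ u v, u ≠ v → (∀ g ∈ G, d (g u) (g v)) → 1 / 2 < A u v := fun u v huv h =>
    lt_groupAverage_apply G fun g hg => (ht _ _ (by simpa using huv)).1 (h _ (G.inv_mem hg))
  have hfixed : ∀ g ∈ G, ∀ a ∈ ({x, y} : Set X), g a = a := fun g hg =>
    (mem_fixingSubgroup_iff (Perm X)).1 hg
  have hcorner : ∀ a ∈ ({x, y} : Set X), ∀ r : Prop, (∀ w ∉ ({x, y} : Set X), d a w ↔ r) →
      (r → 1 / 2 < A a z) ∧ (¬r → A a z < 1 / 2) := by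
    intro a ha r hr
    have haz : a ≠ z := ne_of_mem_of_not_mem ha hz
    have hgz : ∀ g ∈ G, g z ∉ ({x, y} : Set X) := fun g hg hgz =>
      hz (g.injective (hfixed g hg _ hgz) ▸ hgz)
    refine ⟨fun h => hA a z haz fun g hg => ?_, fun h => ?_⟩
    · rw [hfixed g hg a ha]
      exact (hr _ (hgz g hg)).2 h
    · have := hA z a haz.symm fun g hg => by
        rw [hfixed g hg a ha, (hd.2 _ _ (ne_of_mem_of_not_mem ha (hgz g hg)).symm)]
        exact mt (hr _ (hgz g hg)).1 h
      linarith [apply_swap_of_mem_prCl hT hAD haz]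
  obtain ⟨hxp, hxnp⟩ := hcorner x (by simp) p fun w hw => (hrow w hw).1
  obtain ⟨hyq, hynq⟩ := hcorner y (by simp) q fun w hw => (hrow w hw).2
  refine ⟨A, ⟨hAD, isPermInvariant_groupAverage G t, hA x y hxy fun g hg => ?_⟩,
    hxp, hxnp, hyq, hynq⟩
  rw [hfixed g hg x (by simp), hfixed g hg y (by simp)]
  exact hdxy

theorem stmt4_general [Fintype X] (hcard : 3 ≤ Fintype.card X)
    (D : Set (X → X → Prop)) (hT : ∀ c ∈ D, IsTournament c)
    (hsym : SymmetricSet D)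
    (hall : ∀ c : X → X → Prop, IsTournament c → c ∈ majCl D) :
    ∀ x y : X, x ≠ y →
      ∃ t ∈ prCl D, 1 / 2 < t x y ∧
        ∀ u v : X, u ≠ v → ({u, v} : Set X) ≠ ({x, y} : Set X) → t u v = 1 / 2 := by
  classical
  intro x y hxy
  obtain ⟨z, hzx, hzy⟩ := ENat.exists_ne_ne_of_three_le (by simpa using hcard) x y
  have hz : z ∉ ({x, y} : Set X) := by simp [hzx, hzy]
  let ev (a b : X) : (X → X → ℝ) →ᵃ[ℝ] ℝ :=
    (LinearMap.proj (R := ℝ) (φ := fun _ : X => ℝ) b ∘ₗ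
      LinearMap.proj (R := ℝ) (φ := fun _ : X => X → ℝ) a).toAffineMap
  have hS : Convex ℝ {t | t ∈ prCl D ∧
      IsPermInvariant (fixingSubgroup (Perm X) {x, y}) t ∧ 1 / 2 < t x y} :=
    (convex_convexHull ℝ _).inter ((convex_setOf_isPermInvariant _).inter
      ((convex_Ioi _).affine_preimage (ev x y)))
  obtain ⟨t, ⟨htD, htG, htxy⟩, htx, hty⟩ := hS.exists_apply_eq_of_quadrants (ev x z) (ev y z)
    (exists_isPermInvariant_quadrant hT hsym hall hxy hz)
  exact ⟨t, htD, htxy, fun u v huv hne =>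
    eq_half_of_isPermInvariant (fun _ _ => apply_swap_of_mem_prCl hT htD) htG hz htx hty huv hne⟩

theorem stmt4 [Fintype X] (hcard : 3 ≤ Fintype.card X)
    (D : Set (X → X → Prop)) (hne : D.Nonempty) (hT : ∀ c ∈ D, IsTournament c)
    (hsym : SymmetricSet D)
    (hall : ∀ c : X → X → Prop, IsTournament c → c ∈ majCl D) :
    ∀ x y : X, x ≠ y →
      ∃ t ∈ prCl D, 1 / 2 < t x y ∧
        ∀ u v : X, u ≠ v → ({u, v} : Set X) ≠ ({x, y} : Set X) → t u v = 1 / 2 :=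
  stmt4_general hcard D hT hsym hall
end

section
/- Let 𝒟 be a symmetric set of tournaments on X, let t ∈ pr-cl(𝒟), and let x, y ∈ X be distinct. For a permutation π of X let t^π be the weighted tournament with t^π(u,v) = t(π⁻¹(u), π⁻¹(v)), and let t* = (1/(n−2)!) · Σ_{π ∈ Π_{x,y}} t^π, where Π_{x,y} is the set of permutations of X fixing x and y. Then t* ∈ pr-cl(𝒟) and t* = t⟨x,y,a,s0,s1⟩, where a = t(x,y), s0 = (Σ_{z ∈ X∖{x,y}} t(x,z))/(n−2), and s1 = (Σ_{z ∈ X∖{x,y}} t(y,z))/(n−2). -/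
open scoped BigOperators

variable {X : Type*}

/-!
The average `t*` is a convex combination of the relabellings `t^π`, each of which lies in
`pr-cl(𝒟)` because `𝒟` is symmetric; hence `t* ∈ pr-cl(𝒟)`, and in particular `t*` is a weighted
tournament. By construction `t*` is invariant under the stabiliser of `x` and `y`. Invariance under
the transposition of `z₁, z₂ ∉ {x, y}` gives `t*(z₁,z₂) = t*(z₂,z₁) = 1 - t*(z₁,z₂)`, so this value
is `1/2`; and since the stabiliser acts transitively on `X ∖ {x, y}`, `t*(x,z)` does not depend on
`z` and therefore equals its mean `s₀` over `z` (likewise `s₁`).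
-/

open Finset Equiv

lemma isWeighted_tOf {d : X → X → Prop} (hd : IsTournament d) : IsWeighted (tOf d) := by
  intro u v huv
  by_cases h : d u v
  · simp [tOf, h, (hd.2 u v huv).1 h]
  · have : d v u := by_contra fun h' => h ((hd.2 u v huv).2 h')
    simp [tOf, h, this]

lemma convex_setOf_isWeighted : Convex ℝ {t : X → X → ℝ | IsWeighted t} := by
  intro f hf g hg a b ha hb hab u v huv
  obtain ⟨hf0, hf1, hfs⟩ := hf u v huv
  obtain ⟨hg0, hg1, hgs⟩ := hg u v huv
  simp only [Pi.add_apply, Pi.smul_apply, smul_eq_mul, hfs, hgs]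
  refine ⟨by positivity, by nlinarith, by linear_combination hab⟩

lemma isWeighted_of_mem_prCl {D : Set (X → X → Prop)} (hT : ∀ c ∈ D, IsTournament c)
    {t : X → X → ℝ} (ht : t ∈ prCl D) : IsWeighted t :=
  convexHull_min (by rintro _ ⟨c, hc, rfl⟩; exact isWeighted_tOf (hT c hc))
    convex_setOf_isWeighted ht

lemma perm_mem_prCl {D : Set (X → X → Prop)} (hsym : SymmetricSet D) {t : X → X → ℝ}
    (ht : t ∈ prCl D) (π : Perm X) : (fun u v => t (π.symm u) (π.symm v)) ∈ prCl D := by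
  let relabel : (X → X → ℝ) →ₗ[ℝ] (X → X → ℝ) :=
    { toFun := fun f u v => f (π.symm u) (π.symm v)
      map_add' := fun _ _ => rfl
      map_smul' := fun _ _ => rfl }
  have h : relabel t ∈ relabel '' prCl D := ⟨t, ht, rfl⟩
  rw [prCl, relabel.image_convexHull] at h
  refine convexHull_mono ?_ h
  rintro _ ⟨_, ⟨c, hc, rfl⟩, rfl⟩
  exact ⟨permAct π c, hsym π c hc, rfl⟩

lemma eq_tConfig_of_isWeighted {w : X → X → ℝ} (hw : IsWeighted w) {x y : X} {a s₀ s₁ : ℝ}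
    (hxy : w x y = a) (hx : ∀ z, z ≠ x → z ≠ y → w x z = s₀)
    (hy : ∀ z, z ≠ x → z ≠ y → w y z = s₁)
    (hmid : ∀ z z', z ≠ z' → z ≠ x → z ≠ y → z' ≠ x → z' ≠ y → w z z' = 1 / 2)
    {u v : X} (huv : u ≠ v) : w u v = tConfig x y a s₀ s₁ u v := by
  simp only [tConfig, if_neg huv]
  split_ifs with h₁ h₂ h₃ h₄ h₅ h₆
  · rw [h₁.1, h₁.2, hxy]
  · rw [h₂.1, h₂.2, (hw x y (h₂.2 ▸ h₂.1 ▸ huv.symm)).2.2, hxy]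
  · subst h₃; exact hx v (Ne.symm huv) fun h => h₁ ⟨rfl, h⟩
  · subst h₄; rw [(hw v u (Ne.symm huv)).2.2, hx u h₃ fun h => h₂ ⟨h, rfl⟩]
  · subst h₅; exact hy v (fun h => h₂ ⟨rfl, h⟩) (Ne.symm huv)
  · subst h₆; rw [(hw v u (Ne.symm huv)).2.2, hy u h₃ h₅]
  · exact hmid u v huv h₃ h₅ h₄ h₆

section PairStabilizer

variable [Fintype X] [DecidableEq X]

def pairStabilizer (x y : X) : Finset (Perm X) :=
  univ.filter fun π => π x = x ∧ π y = y

noncomputable def pairAverage (x y : X) (t : X → X → ℝ) : X → X → ℝ :=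
  fun u v => (1 / ((Fintype.card X - 2).factorial : ℝ)) *
    ∑ π ∈ pairStabilizer x y, t (π.symm u) (π.symm v)

variable {x y : X}

@[simp]
lemma mem_pairStabilizer {π : Perm X} : π ∈ pairStabilizer x y ↔ π x = x ∧ π y = y := by
  simp [pairStabilizer]

lemma symm_apply_of_mem_pairStabilizer {π : Perm X} (hπ : π ∈ pairStabilizer x y) {a : X}
    (ha : a = x ∨ a = y) : π.symm a = a := by
  rw [mem_pairStabilizer] at hπ
  rw [symm_apply_eq]
  rcases ha with rfl | rfl
  exacts [hπ.1.symm, hπ.2.symm]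

lemma swap_mem_pairStabilizer {z z' : X} (hzx : z ≠ x) (hzy : z ≠ y) (hz'x : z' ≠ x)
    (hz'y : z' ≠ y) : swap z z' ∈ pairStabilizer x y :=
  mem_pairStabilizer.2 ⟨swap_apply_of_ne_of_ne hzx.symm hz'x.symm,
    swap_apply_of_ne_of_ne hzy.symm hz'y.symm⟩

lemma card_pairStabilizer (hxy : x ≠ y) :
    #(pairStabilizer x y) = (Fintype.card X - 2).factorial := by
  let fixPair : {f : Perm X // ∀ a, ¬(a ≠ x ∧ a ≠ y) → f a = a} ≃
      {π : Perm X // π ∈ pairStabilizer x y} :=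
    subtypeEquivRight fun f => by
      simp only [mem_pairStabilizer, not_and_or, not_not]
      exact ⟨fun h => ⟨h x (.inl rfl), h y (.inr rfl)⟩,
        fun h a ha => by rcases ha with rfl | rfl; exacts [h.1, h.2]⟩
  have hcompl : Fintype.card {z : X // z ≠ x ∧ z ≠ y} = Fintype.card X - 2 := by
    rw [Fintype.card_subtype, ← card_pair hxy, ← card_compl]
    congr 1
    ext z
    simp
  rw [← Fintype.card_coe, ← Fintype.card_congr ((Perm.subtypeEquivSubtypePerm _).trans fixPair),
    Fintype.card_perm, hcompl]

lemma sum_pairStabilizer_mul_left {σ : Perm X} (hσ : σ ∈ pairStabilizer x y)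
    (f : Perm X → ℝ) : ∑ π ∈ pairStabilizer x y, f (σ * π) = ∑ π ∈ pairStabilizer x y, f π := by
  refine sum_equiv (Equiv.mulLeft σ) (fun π => ?_) fun _ _ => rfl
  simp only [mem_pairStabilizer, coe_mulLeft, Perm.mul_apply, ← σ.eq_symm_apply,
    symm_apply_of_mem_pairStabilizer hσ (.inl rfl), symm_apply_of_mem_pairStabilizer hσ (.inr rfl)]

lemma pairAverage_apply_apply (t : X → X → ℝ) {σ : Perm X} (hσ : σ ∈ pairStabilizer x y)
    (u v : X) : pairAverage x y t (σ u) (σ v) = pairAverage x y t u v := by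
  have hσ' : σ⁻¹ ∈ pairStabilizer x y := mem_pairStabilizer.2
    ⟨symm_apply_of_mem_pairStabilizer hσ (.inl rfl), symm_apply_of_mem_pairStabilizer hσ (.inr rfl)⟩
  unfold pairAverage
  rw [← sum_pairStabilizer_mul_left hσ' fun π => t (π.symm u) (π.symm v)]
  simp [Perm.mul_def, Perm.inv_def]

lemma card_mul_sum_pairStabilizer_apply_symm {z : X} (hzx : z ≠ x) (hzy : z ≠ y) (g : X → ℝ) :
    (#({x, y}ᶜ : Finset X) : ℝ) * ∑ π ∈ pairStabilizer x y, g (π.symm z) =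
      #(pairStabilizer x y) * ∑ w ∈ {x, y}ᶜ, g w := by
  have hconst : ∀ w ∈ ({x, y}ᶜ : Finset X),
      ∑ π ∈ pairStabilizer x y, g (π.symm w) = ∑ π ∈ pairStabilizer x y, g (π.symm z) := by
    intro w hw
    simp only [mem_compl, mem_insert, mem_singleton, not_or] at hw
    rw [← sum_pairStabilizer_mul_left (swap_mem_pairStabilizer hzx hzy hw.1 hw.2)]
    simp [Perm.mul_def]
  have hperm : ∀ π ∈ pairStabilizer x y, ∑ w ∈ {x, y}ᶜ, g (π.symm w) = ∑ w ∈ {x, y}ᶜ, g w := by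
    intro π hπ
    refine sum_equiv π.symm (fun w => ?_) fun _ _ => rfl
    simp only [mem_compl, mem_insert, mem_singleton]
    conv_rhs => rw [← symm_apply_of_mem_pairStabilizer hπ (.inl rfl),
      ← symm_apply_of_mem_pairStabilizer hπ (.inr rfl), π.symm.injective.eq_iff,
      π.symm.injective.eq_iff]
  calc (#({x, y}ᶜ : Finset X) : ℝ) * ∑ π ∈ pairStabilizer x y, g (π.symm z)
      = ∑ w ∈ {x, y}ᶜ, ∑ π ∈ pairStabilizer x y, g (π.symm w) := by
        rw [sum_congr rfl hconst, sum_const, nsmul_eq_mul]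
    _ = ∑ π ∈ pairStabilizer x y, ∑ w ∈ {x, y}ᶜ, g (π.symm w) := sum_comm
    _ = #(pairStabilizer x y) * ∑ w ∈ {x, y}ᶜ, g w := by
        rw [sum_congr rfl hperm, sum_const, nsmul_eq_mul]

lemma pairAverage_apply_of_fixed (hxy : x ≠ y) (t : X → X → ℝ) {a z : X} (ha : a = x ∨ a = y)
    (hzx : z ≠ x) (hzy : z ≠ y) :
    pairAverage x y t a z =
      (∑ᶠ w ∈ {w : X | w ≠ x ∧ w ≠ y}, t a w) / ((Fintype.card X : ℝ) - 2) := by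
  have hK : (#({x, y}ᶜ : Finset X) : ℝ) = Fintype.card X - 2 := by
    have h2 : 2 ≤ Fintype.card X := card_pair hxy ▸ card_le_univ _
    rw [card_compl, card_pair hxy, Nat.cast_sub h2, Nat.cast_two]
  have hK0 : (#({x, y}ᶜ : Finset X) : ℝ) ≠ 0 := by
    exact_mod_cast (card_pos.2 ⟨z, by simp [hzx, hzy]⟩).ne'
  have hset : {w : X | w ≠ x ∧ w ≠ y} = ↑({x, y}ᶜ : Finset X) := by ext; simp [and_comm]
  have h := card_mul_sum_pairStabilizer_apply_symm hzx hzy (t a)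
  rw [card_pairStabilizer hxy] at h
  rw [hset, finsum_mem_coe_finset, ← hK, pairAverage,
    sum_congr rfl fun π hπ => by rw [symm_apply_of_mem_pairStabilizer hπ ha]]
  field_simp
  linear_combination h

lemma pairAverage_apply_left_right (hxy : x ≠ y) (t : X → X → ℝ) :
    pairAverage x y t x y = t x y := by
  rw [pairAverage, sum_congr rfl fun π hπ => by
    rw [symm_apply_of_mem_pairStabilizer hπ (.inl rfl),
      symm_apply_of_mem_pairStabilizer hπ (.inr rfl)],
    sum_const, card_pairStabilizer hxy, nsmul_eq_mul]
  field_simp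

lemma pairAverage_apply_of_ne {t : X → X → ℝ} (hw : IsWeighted (pairAverage x y t)) {u v : X}
    (huv : u ≠ v) (hux : u ≠ x) (huy : u ≠ y) (hvx : v ≠ x) (hvy : v ≠ y) :
    pairAverage x y t u v = 1 / 2 := by
  have h := pairAverage_apply_apply t (swap_mem_pairStabilizer hux huy hvx hvy) u v
  rw [swap_apply_left, swap_apply_right, (hw u v huv).2.2] at h
  linarith

lemma pairAverage_mem_prCl (hxy : x ≠ y) {D : Set (X → X → Prop)} (hsym : SymmetricSet D)
    {t : X → X → ℝ} (ht : t ∈ prCl D) : pairAverage x y t ∈ prCl D := by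
  have hsum : pairAverage x y t = ∑ π ∈ pairStabilizer x y,
      (1 / ((Fintype.card X - 2).factorial : ℝ)) • fun u v => t (π.symm u) (π.symm v) := by
    ext u v
    simp [pairAverage, Finset.sum_apply, Finset.mul_sum]
  rw [hsum]
  refine (convex_convexHull ℝ _).sum_mem (fun _ _ => by positivity) ?_
    fun π _ => perm_mem_prCl hsym ht π
  rw [sum_const, card_pairStabilizer hxy, nsmul_eq_mul]
  field_simp

end PairStabilizer

theorem stmt8_general [Fintype X] [DecidableEq X]
    (D : Set (X → X → Prop)) (hT : ∀ c ∈ D, IsTournament c) (hsym : SymmetricSet D)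
    (t : X → X → ℝ) (ht : t ∈ prCl D) (x y : X) (hxy : x ≠ y) :
    (fun u v : X => (1 / ((Nat.factorial (Fintype.card X - 2)) : ℝ)) *
        ∑ π ∈ Finset.univ.filter (fun π : Equiv.Perm X => π x = x ∧ π y = y),
          t (π.symm u) (π.symm v)) ∈ prCl D ∧
    ∀ u v : X, u ≠ v →
      (1 / ((Nat.factorial (Fintype.card X - 2)) : ℝ)) *
          (∑ π ∈ Finset.univ.filter (fun π : Equiv.Perm X => π x = x ∧ π y = y),
            t (π.symm u) (π.symm v)) =
        tConfig x y (t x y)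
          ((∑ᶠ z ∈ {z : X | z ≠ x ∧ z ≠ y}, t x z) / ((Fintype.card X : ℝ) - 2))
          ((∑ᶠ z ∈ {z : X | z ≠ x ∧ z ≠ y}, t y z) / ((Fintype.card X : ℝ) - 2)) u v := by
  have hmem : pairAverage x y t ∈ prCl D := pairAverage_mem_prCl hxy hsym ht
  have hw : IsWeighted (pairAverage x y t) := isWeighted_of_mem_prCl hT hmem
  refine ⟨hmem, fun u v huv => eq_tConfig_of_isWeighted hw ?_ ?_ ?_ ?_ huv⟩
  · exact pairAverage_apply_left_right hxy t
  · exact fun z hzx hzy => pairAverage_apply_of_fixed hxy t (.inl rfl) hzx hzy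
  · exact fun z hzx hzy => pairAverage_apply_of_fixed hxy t (.inr rfl) hzx hzy
  · exact fun z z' hzz' hzx hzy hz'x hz'y => pairAverage_apply_of_ne hw hzz' hzx hzy hz'x hz'y

theorem stmt8 [Fintype X] [DecidableEq X] (hcard : 3 ≤ Fintype.card X)
    (D : Set (X → X → Prop)) (hT : ∀ c ∈ D, IsTournament c) (hsym : SymmetricSet D)
    (t : X → X → ℝ) (ht : t ∈ prCl D) (x y : X) (hxy : x ≠ y) :
    (fun u v : X => (1 / ((Nat.factorial (Fintype.card X - 2)) : ℝ)) *
        ∑ π ∈ Finset.univ.filter (fun π : Equiv.Perm X => π x = x ∧ π y = y),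
          t (π.symm u) (π.symm v)) ∈ prCl D ∧
    ∀ u v : X, u ≠ v →
      (1 / ((Nat.factorial (Fintype.card X - 2)) : ℝ)) *
          (∑ π ∈ Finset.univ.filter (fun π : Equiv.Perm X => π x = x ∧ π y = y),
            t (π.symm u) (π.symm v)) =
        tConfig x y (t x y)
          ((∑ᶠ z ∈ {z : X | z ≠ x ∧ z ≠ y}, t x z) / ((Fintype.card X : ℝ) - 2))
          ((∑ᶠ z ∈ {z : X | z ≠ x ∧ z ≠ y}, t y z) / ((Fintype.card X : ℝ) - 2)) u v :=
  stmt8_general D hT hsym t ht x y hxy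
end

section
/- Let 𝒞 be a set of tournaments on X each of which is balanced. Then every tournament d ∈ maj-cl(𝒞) satisfies: for every set Y with ∅ ≠ Y ⊊ X there exist u ∈ Y and v ∈ X ∖ Y with d u v, and there exist u' ∈ X ∖ Y and v' ∈ Y with d u' v'. -/
open scoped BigOperators

variable {X : Type*}

open Classical in
lemma stmt9_key [Fintype X]
    (C : Set (X → X → Prop)) (hT : ∀ c ∈ C, IsTournament c)
    (hbal : ∀ c ∈ C, IsBalanced c)
    (d : X → X → Prop) (hd : d ∈ majCl C) (Y : Set X)
    (hne : Y.Nonempty) (hpr : Y ≠ Set.univ) :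
    ∃ u ∈ Y, ∃ v ∈ Yᶜ, d u v := by
  by_contra hcon
  push_neg at hcon
  obtain ⟨hdT, w, hw01, hwC, hwfin, hwsum, hmaj⟩ := hd
  set s : Finset (X → X → Prop) := hwfin.toFinset with hs
  have hsC : ∀ c ∈ s, c ∈ C := by
    intro c hc
    exact hwC c (by simpa [hs, Function.mem_support] using hc)
  have hwsum' : ∑ c ∈ s, w c = 1 := by
    rw [← hwsum, finsum_eq_sum w hwfin]
  -- S u v as a finite sum
  have hSsum : ∀ u v : X,
      (∑ᶠ c ∈ {c : X → X → Prop | c ∈ C ∧ c u v}, w c)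
        = ∑ c ∈ s, (if c u v then w c else 0) := by
    intro u v
    have hfin' : ({c : X → X → Prop | c ∈ C ∧ c u v} ∩ Function.support w).Finite :=
      hwfin.subset Set.inter_subset_right
    rw [finsum_mem_eq_sum _ hfin']
    rw [show (∑ c ∈ s, if c u v then w c else 0)
        = ∑ c ∈ s.filter (fun c => c u v), w c from (Finset.sum_filter _ _).symm]
    apply Finset.sum_congr _ (fun _ _ => rfl)
    ext c
    simp only [Set.Finite.mem_toFinset, Set.mem_inter_iff, Set.mem_setOf_eq,
      Function.mem_support, Finset.mem_filter, hs]
    constructor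
    · rintro ⟨⟨_, h2⟩, h3⟩; exact ⟨h3, h2⟩
    · rintro ⟨h3, h2⟩; exact ⟨⟨hwC c h3, h2⟩, h3⟩
  -- valT as a real sum
  have hval : ∀ (c : X → X → Prop) (x : X),
      (valT c x : ℝ) = ∑ v : X, tOf c x v := by
    intro c x
    rw [valT, Set.ncard_eq_toFinset_card']
    rw [show (∑ v : X, tOf c x v) = ∑ v : X, (if c x v then (1:ℝ) else 0) from rfl]
    rw [Finset.sum_boole]
    congr 1
    rw [Set.toFinset_setOf]
  -- the finset Y
  set Yf : Finset X := Finset.univ.filter (· ∈ Y) with hYf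
  have hmemYf : ∀ u : X, u ∈ Yf ↔ u ∈ Y := by
    intro u; simp [hYf]
  have hmemYfc : ∀ u : X, u ∈ Yfᶜ ↔ u ∈ Yᶜ := by
    intro u; simp [hYf]
  have hYfne : Yf.Nonempty := by
    obtain ⟨x, hx⟩ := hne
    exact ⟨x, (hmemYf x).2 hx⟩
  have hYfcne : Yfᶜ.Nonempty := by
    obtain ⟨x, hx⟩ := Set.nonempty_compl.2 hpr
    exact ⟨x, (hmemYfc x).2 hx⟩
  -- cross count for balanced tournaments
  have hN : ∀ c ∈ C, ∑ u ∈ Yf, ∑ v ∈ Yfᶜ, tOf c u v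
      = (Yf.card : ℝ) * (Yfᶜ.card : ℝ) / 2 := by
    intro c hc
    have hcT := hT c hc
    have hone : ∀ u v : X, u ≠ v → tOf c u v + tOf c v u = 1 := by
      intro u v huv
      have := (hcT.2 u v huv)
      by_cases h : c u v
      · simp [tOf, h, (this.1 h)]
      · have : c v u := by
          by_contra h2
          exact h (this.2 h2)
        simp [tOf, h, this]
    have hself : ∀ u : X, tOf c u u = 0 := by
      intro u; simp [tOf, hcT.1 u]
    -- total row sums
    have h1 : ∑ u ∈ Yf, ∑ v : X, tOf c u v
        = (Yf.card : ℝ) * ((Fintype.card X : ℝ) - 1) / 2 := by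
      have : ∀ u ∈ Yf, ∑ v : X, tOf c u v = ((Fintype.card X : ℝ) - 1) / 2 := by
        intro u _
        rw [← hval c u]
        exact hbal c hc u
      rw [Finset.sum_congr rfl this, Finset.sum_const, nsmul_eq_mul]
      ring
    -- inner count
    have hA : 2 * (∑ u ∈ Yf, ∑ v ∈ Yf, tOf c u v)
        = (Yf.card : ℝ) * ((Yf.card : ℝ) - 1) := by
      have hswap : (∑ u ∈ Yf, ∑ v ∈ Yf, tOf c u v)
          = ∑ u ∈ Yf, ∑ v ∈ Yf, tOf c v u := Finset.sum_comm
      have : 2 * (∑ u ∈ Yf, ∑ v ∈ Yf, tOf c u v)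
          = ∑ u ∈ Yf, ∑ v ∈ Yf, (tOf c u v + tOf c v u) := by
        rw [two_mul]
        nth_rewrite 2 [hswap]
        rw [← Finset.sum_add_distrib]
        congr 1; ext u
        rw [← Finset.sum_add_distrib]
      rw [this]
      have : ∀ u ∈ Yf, ∑ v ∈ Yf, (tOf c u v + tOf c v u)
          = (Yf.card : ℝ) - 1 := by
        intro u hu
        have : ∀ v ∈ Yf, tOf c u v + tOf c v u
            = 1 - (if u = v then (1:ℝ) else 0) := by
          intro v _
          by_cases h : u = v
          · subst h; simp [hself u]
          · simp [h, hone u v h]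
        rw [Finset.sum_congr rfl this, Finset.sum_sub_distrib,
          Finset.sum_const, Finset.sum_ite_eq Yf u (fun _ => (1:ℝ)), if_pos hu,
          nsmul_eq_mul, mul_one]
      rw [Finset.sum_congr rfl this, Finset.sum_const, nsmul_eq_mul]
    have hsplit : ∑ u ∈ Yf, ∑ v ∈ Yfᶜ, tOf c u v
        = ∑ u ∈ Yf, ∑ v : X, tOf c u v - ∑ u ∈ Yf, ∑ v ∈ Yf, tOf c u v := by
      rw [eq_sub_iff_add_eq, ← Finset.sum_add_distrib]
      congr 1; ext u
      rw [add_comm]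
      exact Finset.sum_add_sum_compl Yf _
    have hcard : (Yfᶜ.card : ℝ) = (Fintype.card X : ℝ) - (Yf.card : ℝ) := by
      rw [Finset.card_compl, Nat.cast_sub (Finset.card_le_univ Yf)]
    rw [hsplit, h1, hcard]
    linarith [hA]
  -- each cross pair has S u v < 1/2
  have hSlt : ∀ u ∈ Yf, ∀ v ∈ Yfᶜ,
      (∑ c ∈ s, (if c u v then w c else 0)) < 1 / 2 := by
    intro u hu v hv
    have huY : u ∈ Y := (hmemYf u).1 hu
    have hvY : v ∈ Yᶜ := (hmemYfc v).1 hv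
    have huv : u ≠ v := by
      rintro rfl; exact hvY huY
    have hndu : ¬ d u v := hcon u huY v hvY
    have hdvu : d v u := by
      by_contra h2
      exact hndu ((hdT.2 u v huv).2 h2)
    have hgt : 1 / 2 < ∑ c ∈ s, (if c v u then w c else 0) := by
      rw [← hSsum v u]
      exact (hmaj v u huv.symm).1 hdvu
    have hadd : (∑ c ∈ s, (if c u v then w c else 0))
        + (∑ c ∈ s, (if c v u then w c else 0)) = 1 := by
      rw [← Finset.sum_add_distrib, ← hwsum']
      apply Finset.sum_congr rfl
      intro c hc
      have hcT := hT c (hsC c hc)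
      have := hcT.2 u v huv
      by_cases h : c u v
      · simp [h, this.1 h]
      · have hvu : c v u := by
          by_contra h2; exact h (this.2 h2)
        simp [h, hvu]
    linarith
  -- the double sum
  set P : Finset (X × X) := Yf ×ˢ Yfᶜ with hP
  have hPne : P.Nonempty := hYfne.product hYfcne
  have hlt : ∑ p ∈ P, (∑ c ∈ s, (if c p.1 p.2 then w c else 0))
      < (Yf.card : ℝ) * (Yfᶜ.card : ℝ) / 2 := by
    calc ∑ p ∈ P, (∑ c ∈ s, (if c p.1 p.2 then w c else 0))
        < ∑ _p ∈ P, (1/2 : ℝ) := by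
          apply Finset.sum_lt_sum_of_nonempty hPne
          intro p hp
          rw [hP, Finset.mem_product] at hp
          exact hSlt p.1 hp.1 p.2 hp.2
      _ = (Yf.card : ℝ) * (Yfᶜ.card : ℝ) / 2 := by
          rw [Finset.sum_const, hP, Finset.card_product, nsmul_eq_mul]
          push_cast
          ring
  have heq : ∑ p ∈ P, (∑ c ∈ s, (if c p.1 p.2 then w c else 0))
      = (Yf.card : ℝ) * (Yfᶜ.card : ℝ) / 2 := by
    rw [Finset.sum_comm]
    have : ∀ c ∈ s, ∑ p ∈ P, (if c p.1 p.2 then w c else 0)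
        = w c * ((Yf.card : ℝ) * (Yfᶜ.card : ℝ) / 2) := by
      intro c hc
      have : ∑ p ∈ P, (if c p.1 p.2 then w c else 0)
          = w c * ∑ p ∈ P, tOf c p.1 p.2 := by
        rw [Finset.mul_sum]
        apply Finset.sum_congr rfl
        intro p _
        simp [tOf, mul_ite]
      rw [this]
      congr 1
      rw [hP, Finset.sum_product]
      exact hN c (hsC c hc)
    rw [Finset.sum_congr rfl this, ← Finset.sum_mul, hwsum', one_mul]
  linarith

theorem stmt9 [Fintype X] (hcard : 3 ≤ Fintype.card X)
    (C : Set (X → X → Prop)) (hT : ∀ c ∈ C, IsTournament c)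
    (hbal : ∀ c ∈ C, IsBalanced c) :
    ∀ d ∈ majCl C, ∀ Y : Set X, Y.Nonempty → Y ≠ Set.univ →
      (∃ u ∈ Y, ∃ v ∈ Yᶜ, d u v) ∧ (∃ u' ∈ Yᶜ, ∃ v' ∈ Y, d u' v') := by
  intro d hd Y hne hpr
  constructor
  · exact stmt9_key C hT hbal d hd Y hne hpr
  · have h1 : Yᶜ.Nonempty := Set.nonempty_compl.2 hpr
    have h2 : Yᶜ ≠ Set.univ := by
      intro h
      obtain ⟨x, hx⟩ := hne
      have : x ∈ Yᶜ := h ▸ Set.mem_univ x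
      exact this hx
    have := stmt9_key C hT hbal d hd Yᶜ h1 h2
    simpa [compl_compl] using this
end

section
/- Let 𝒟 be a set of tournaments on X each of which is balanced. Then every weighted tournament in pr-cl(𝒟) is balanced, and every tournament in maj-cl(𝒟) is pseudo-balanced. -/
open scoped BigOperators

variable {X : Type*}

open Classical

lemma setCompl (x : X) [Fintype X] : {y : X | y ≠ x} = (({x}ᶜ : Finset X) : Set X) := by
  ext y; simp

lemma rowsum_tOf [Fintype X] (c : X → X → Prop) (hc : ∀ x, ¬ c x x) (x : X) :
    ∑ y ∈ ({x}ᶜ : Finset X), tOf c x y = (valT c x : ℝ) := by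
  classical
  have h1 : {y | c x y} = ((Finset.univ.filter (fun y => c x y) : Finset X) : Set X) := by
    ext y; simp
  have h2 : (valT c x : ℝ) = ((Finset.univ.filter (fun y => c x y)).card : ℝ) := by
    rw [valT, h1, Set.ncard_coe_finset]
  have h3 : ∑ y ∈ ({x}ᶜ : Finset X), tOf c x y = ∑ y : X, tOf c x y := by
    apply Finset.sum_subset (Finset.subset_univ _)
    intro y _ hy
    have : y = x := by simpa using hy
    subst this
    simp [tOf, hc y]
  rw [h3, h2]
  simp [tOf, Finset.sum_boole]

theorem stmt10 [Fintype X] (hcard : 3 ≤ Fintype.card X)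
    (D : Set (X → X → Prop)) (hT : ∀ c ∈ D, IsTournament c)
    (hbal : ∀ c ∈ D, IsBalanced c) :
    (∀ t ∈ prCl D, BalancedW t) ∧ (∀ d ∈ majCl D, PseudoBalanced d) := by
  classical
  set n : ℝ := (Fintype.card X : ℝ) with hn
  set C : Set (X → X → ℝ) :=
    {t | ∀ x : X, ∑ y ∈ ({x}ᶜ : Finset X), t x y = (n - 1) / 2} with hC
  have hsub : tOf '' D ⊆ C := by
    rintro _ ⟨c, hc, rfl⟩ x
    rw [rowsum_tOf c (hT c hc).1 x, hbal c hc x]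
  have hconv : Convex ℝ C := by
    intro t1 h1 t2 h2 a b ha hb hab x
    have key : ∀ y, (a • t1 + b • t2) x y = a * t1 x y + b * t2 x y := by
      intro y; simp
    simp only [key]
    rw [Finset.sum_add_distrib, ← Finset.mul_sum, ← Finset.mul_sum, h1 x, h2 x]
    linear_combination ((n - 1) / 2) * hab
  have part1 : ∀ t ∈ prCl D, BalancedW t := by
    intro t ht x
    rw [setCompl x, finsum_mem_coe_finset]
    exact convexHull_min hsub hconv ht x
  refine ⟨part1, ?_⟩
  rintro d ⟨hdT, w, hw01, hwD, hwfin, hwsum, hmaj⟩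
  set s : Finset (X → X → Prop) := hwfin.toFinset with hs
  have hsum1 : ∑ c ∈ s, w c = 1 := by rw [← finsum_eq_sum w hwfin]; exact hwsum
  set t : X → X → ℝ := fun x y => ∑ c ∈ s, w c * tOf c x y with ht
  have hmemD : ∀ c ∈ s, c ∈ D := by
    intro c hc; exact hwD c (by simpa [hs] using hc)
  have htOf01 : ∀ (c : X → X → Prop) (x y : X), 0 ≤ tOf c x y ∧ tOf c x y ≤ 1 := by
    intro c x y; unfold tOf; split <;> norm_num
  have hIW : IsWeighted t := by
    intro x y hxy
    refine ⟨Finset.sum_nonneg fun c _ => mul_nonneg (hw01 c).1 (htOf01 c x y).1, ?_, ?_⟩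
    · calc t x y ≤ ∑ c ∈ s, w c * 1 :=
          Finset.sum_le_sum fun c _ => mul_le_mul_of_nonneg_left (htOf01 c x y).2 (hw01 c).1
        _ = 1 := by simp [hsum1]
    · have : ∀ c ∈ s, w c * tOf c y x = w c - w c * tOf c x y := by
        intro c hc
        have hct := hT c (hmemD c hc)
        have : tOf c y x = 1 - tOf c x y := by
          unfold tOf
          rcases (hct.2 x y hxy) with h
          by_cases hxy2 : c x y
          · simp [hxy2, (h.mp hxy2)]
          · have : c y x := by
              by_contra hyx; exact hxy2 (h.mpr hyx)
            simp [this, hxy2]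
        rw [this]; ring
      rw [ht]
      simp only []
      rw [Finset.sum_congr rfl this, Finset.sum_sub_distrib, hsum1]
  -- t ∈ prCl D
  have htPr : t ∈ prCl D := by
    rw [prCl]
    have : t = ∑ c ∈ s, w c • tOf c := by
      funext x y
      simp [ht, Finset.sum_apply]
    rw [this, ← Finset.centerMass_eq_of_sum_1 s tOf hsum1]
    exact Finset.centerMass_mem_convexHull s (fun c _ => (hw01 c).1) (by rw [hsum1]; norm_num)
      (fun c hc => Set.mem_image_of_mem tOf (hmemD c hc))
  have hBW : BalancedW t := part1 t htPr
  refine ⟨t, hIW, hBW, ?_⟩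
  intro x y hxy hdxy
  have hmaj' := (hmaj x y hxy).mp hdxy
  have hfin2 : ({c : X → X → Prop | c ∈ D ∧ c x y} ∩ Function.support w).Finite :=
    hwfin.subset (Set.inter_subset_right)
  rw [finsum_mem_eq_sum w hfin2] at hmaj'
  have heq : hfin2.toFinset = s.filter (fun c => c x y) := by
    ext c
    simp only [Set.Finite.mem_toFinset, Set.mem_inter_iff, Set.mem_setOf_eq,
      Finset.mem_filter, hs, Function.mem_support]
    constructor
    · rintro ⟨⟨hcD, hcxy⟩, hwc⟩; exact ⟨hwc, hcxy⟩
    · rintro ⟨hwc, hcxy⟩; exact ⟨⟨hwD c hwc, hcxy⟩, hwc⟩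
  have hval : ∑ c ∈ hfin2.toFinset, w c = t x y := by
    rw [heq, Finset.sum_filter]
    apply Finset.sum_congr rfl
    intro c _
    unfold tOf
    split <;> ring
  rw [hval] at hmaj'
  exact hmaj'
end

section
/- If a tournament c on X is pseudo-balanced, then for all distinct u, v ∈ X with c u v there exist k ≥ 3 and distinct elements x_0, x_1, …, x_{k−1} of X with x_0 = u, x_1 = v, c x_i x_{i+1} for all i < k−1, and c x_{k−1} x_0. -/
open scoped BigOperators

variable {X : Type*}

private lemma exists_path_aux {c : X → X → Prop} {a b : X}
    (h : Relation.ReflTransGen c a b) :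
    ∃ m : ℕ, ∃ ys : ℕ → X, ys 0 = a ∧ ys m = b ∧ ∀ i < m, c (ys i) (ys (i+1)) := by
  induction h with
  | refl => exact ⟨0, fun _ => a, rfl, rfl, by omega⟩
  | @tail p q h1 h2 ih =>
    obtain ⟨m, ys, h0, hm, hch⟩ := ih
    refine ⟨m + 1, fun i => if i < m + 1 then ys i else q, by simp [h0], by simp, ?_⟩
    intro i hi
    by_cases h' : i + 1 < m + 1
    · simp only [if_pos (by omega : i < m+1), if_pos h']
      exact hch i (by omega)
    · have hi' : i = m := by omega
      simp only [hi', if_pos (Nat.lt_succ_self m), if_neg (by omega : ¬ m + 1 < m + 1), hm]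
      exact h2

open Classical Finset in
private lemma reach_back [Fintype X] {c : X → X → Prop} (hc : IsTournament c)
    {t : X → X → ℝ} (hw : IsWeighted t) (hb : BalancedW t)
    (hdom : ∀ x y : X, x ≠ y → c x y → 1/2 < t x y)
    {u v : X} : Relation.ReflTransGen c v u := by
  by_contra hnr
  set S : Finset X := Finset.univ.filter (fun x => Relation.ReflTransGen c v x) with hS
  have hvS : v ∈ S := by simp only [hS, Finset.mem_filter, Finset.mem_univ, true_and]; exact Relation.ReflTransGen.refl
  have huS : u ∈ Sᶜ := by simp [hS]; exact hnr
  -- edge direction across the cut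
  have hedge : ∀ x ∈ S, ∀ y ∈ Sᶜ, t x y < 1/2 := by
    intro x hx y hy
    simp only [hS, Finset.mem_filter, Finset.mem_univ, true_and, Finset.mem_compl] at hx hy
    have hyx : y ≠ x := by rintro rfl; exact hy hx
    have hncxy : ¬ c x y := fun h => hy (hx.tail h)
    have hcyx : c y x := (hc.2 y x hyx).2 hncxy
    have h1 : 1/2 < t y x := hdom y x hyx hcyx
    have h2 : t x y = 1 - t y x := (hw y x hyx).2.2
    linarith
  -- row sums as Finset sums
  have hrow : ∀ x : X, ∑ y ∈ Finset.univ.erase x, t x y = ((Fintype.card X : ℝ) - 1) / 2 := by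
    intro x
    have h := hb x
    rw [show {y : X | y ≠ x} = ↑(Finset.univ.erase x) from by ext y; simp,
      finsum_mem_coe_finset] at h
    exact h
  set n : ℝ := (Fintype.card X : ℝ) with hn
  set s : ℝ := (S.card : ℝ) with hs
  have hs1 : (1:ℝ) ≤ s := by
    have := Finset.card_pos.2 ⟨v, hvS⟩
    simp only [hs]; exact_mod_cast this
  have hsplit : ∀ x ∈ S, Finset.univ.erase x = (S.erase x) ∪ Sᶜ := by
    intro x hx
    ext y
    simp only [Finset.mem_erase, Finset.mem_univ, and_true, Finset.mem_union, Finset.mem_compl]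
    constructor
    · intro hyx; by_cases hyS : y ∈ S
      · exact Or.inl ⟨hyx, hyS⟩
      · exact Or.inr hyS
    · rintro (⟨hyx, _⟩ | hyS); · exact hyx
      · rintro rfl; exact hyS hx
  have hdisj : ∀ x : X, Disjoint (S.erase x) Sᶜ := fun x =>
    Disjoint.mono_left (Finset.erase_subset _ _) disjoint_compl_right
  set A : ℝ := ∑ x ∈ S, ∑ y ∈ S.erase x, t x y with hA
  set B : ℝ := ∑ x ∈ S, ∑ y ∈ Sᶜ, t x y with hB
  have hT : s * ((n - 1) / 2) = A + B := by
    have h1 : ∑ x ∈ S, (∑ y ∈ Finset.univ.erase x, t x y) = A + B := by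
      rw [hA, hB, ← Finset.sum_add_distrib]
      refine Finset.sum_congr rfl fun x hx => ?_
      rw [hsplit x hx, Finset.sum_union (hdisj x)]
    rw [← h1]
    rw [Finset.sum_congr rfl fun x _ => hrow x, Finset.sum_const, nsmul_eq_mul]
  have hswap : ∑ x ∈ S, ∑ y ∈ S.erase x, t y x = A := by
    rw [hA]
    exact Finset.sum_comm' (fun x y => by
      simp only [Finset.mem_erase]
      constructor
      · rintro ⟨hx, hyx, hyS⟩; exact ⟨⟨Ne.symm hyx, hx⟩, hyS⟩
      · rintro ⟨⟨hxy, hx⟩, hyS⟩; exact ⟨hx, Ne.symm hxy, hyS⟩)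
  have hA2 : A + A = s * (s - 1) := by
    have key : ∀ x ∈ S, (∑ y ∈ S.erase x, t x y + ∑ y ∈ S.erase x, t y x) = s - 1 := by
      intro x hx
      rw [← Finset.sum_add_distrib]
      have h1 : ∀ y ∈ S.erase x, t x y + t y x = 1 := by
        intro y hy
        have hxy : x ≠ y := (Finset.mem_erase.1 hy).1.symm
        have := (hw x y hxy).2.2
        linarith
      rw [Finset.sum_congr rfl h1, Finset.sum_const, nsmul_eq_mul, mul_one,
        Finset.card_erase_of_mem hx, hs]
      have : 1 ≤ S.card := Finset.card_pos.2 ⟨v, hvS⟩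
      push_cast [this]
      ring
    have h1 : A + A = ∑ x ∈ S, (∑ y ∈ S.erase x, t x y + ∑ y ∈ S.erase x, t y x) := by
      rw [Finset.sum_add_distrib, hswap, ← hA]
    rw [h1, Finset.sum_congr rfl key, Finset.sum_const, nsmul_eq_mul, hs]
  have hBlt : B < s * (n - s) / 2 := by
    have h1 : B = ∑ p ∈ S ×ˢ Sᶜ, t p.1 p.2 := (Finset.sum_product' _ _ _).symm
    have h2 : ∑ p ∈ S ×ˢ Sᶜ, t p.1 p.2 < ∑ p ∈ S ×ˢ Sᶜ, (1/2 : ℝ) := by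
      refine Finset.sum_lt_sum_of_nonempty ⟨(v, u), Finset.mem_product.2 ⟨hvS, huS⟩⟩ ?_
      rintro ⟨x, y⟩ hp
      obtain ⟨hx, hy⟩ := Finset.mem_product.1 hp
      exact hedge x hx y hy
    have h3 : ∑ p ∈ S ×ˢ Sᶜ, (1/2 : ℝ) = s * (n - s) / 2 := by
      rw [Finset.sum_const, nsmul_eq_mul, Finset.card_product, Finset.card_compl]
      have hle : S.card ≤ Fintype.card X := Finset.card_le_univ S
      push_cast [hle]
      ring
    rw [h1]; linarith
  linarith

theorem stmt11 [Fintype X] (hcard : 3 ≤ Fintype.card X)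
    (c : X → X → Prop) (hc : IsTournament c) (hpb : PseudoBalanced c) :
    ∀ u v : X, u ≠ v → c u v →
      ∃ k : ℕ, 3 ≤ k ∧ ∃ xs : ℕ → X,
        (∀ i < k, ∀ j < k, xs i = xs j → i = j) ∧
        xs 0 = u ∧ xs 1 = v ∧
        (∀ i, i + 1 < k → c (xs i) (xs (i + 1))) ∧
        c (xs (k - 1)) (xs 0) := by
  classical
  intro u v huv hcuv
  obtain ⟨t, hw, hb, hdom⟩ := hpb
  have hreach : Relation.ReflTransGen c v u := reach_back hc hw hb hdom
  have hQ : ∃ m : ℕ, ∃ ys : ℕ → X, ys 0 = v ∧ ys m = u ∧ ∀ i < m, c (ys i) (ys (i+1)) :=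
    exists_path_aux hreach
  obtain ⟨ys, h0, hm, hch⟩ := Nat.find_spec hQ
  set m0 := Nat.find hQ with hm0def
  have h2le : 2 ≤ m0 := by
    by_contra h
    have h01 : m0 = 0 ∨ m0 = 1 := by omega
    rcases h01 with h' | h'
    · rw [h'] at hm
      exact huv (hm.symm.trans h0)
    · rw [h'] at hm hch
      have hvu : c v u := by
        have := hch 0 one_pos
        rwa [h0, hm] at this
      exact (hc.2 u v huv).1 hcuv hvu
  have hinj : ∀ i j : ℕ, i < j → j ≤ m0 → ys i ≠ ys j := by
    intro i j hij hjm heq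
    have hm'lt : m0 - (j - i) < m0 := by omega
    refine Nat.find_min hQ hm'lt ⟨fun l => if l ≤ i then ys l else ys (l + (j - i)),
      by simp [h0], ?_, ?_⟩
    · beta_reduce
      by_cases h : m0 - (j - i) ≤ i
      · have hmi : m0 - (j - i) = i := by omega
        have hjm0 : j = m0 := by omega
        rw [if_pos h, hmi, heq, hjm0]
        exact hm
      · rw [if_neg h, show m0 - (j - i) + (j - i) = m0 by omega]
        exact hm
    · intro l hl
      beta_reduce
      by_cases h1 : l + 1 ≤ i
      · rw [if_pos (by omega : l ≤ i), if_pos h1]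
        exact hch l (by omega)
      · by_cases h2 : l ≤ i
        · have hli : l = i := by omega
          rw [if_pos h2, if_neg h1, hli, heq, show i + 1 + (j - i) = j + 1 by omega]
          exact hch j (by omega)
        · rw [if_neg h2, if_neg h1, show l + 1 + (j - i) = (l + (j - i)) + 1 by omega]
          exact hch (l + (j - i)) (by omega)
  refine ⟨m0 + 1, by omega, fun i => if i = 0 then u else ys (i - 1), ?_, by simp,
    by simp [h0], ?_, ?_⟩
  · have key : ∀ i < m0 + 1, ∀ j < m0 + 1, i < j → (if i = 0 then u else ys (i - 1)) ≠
        (if j = 0 then u else ys (j - 1)) := by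
      intro i hi j hj hij
      have hj0 : j ≠ 0 := by omega
      rw [if_neg hj0]
      by_cases hi0 : i = 0
      · rw [if_pos hi0, ← hm]
        intro h
        exact hinj (j - 1) m0 (by omega) le_rfl (h.symm)
      · rw [if_neg hi0]
        exact hinj (i - 1) (j - 1) (by omega) (by omega)
    intro i hi j hj heq
    rcases lt_trichotomy i j with h | h | h
    · exact absurd heq (key i hi j hj h)
    · exact h
    · exact absurd heq.symm (key j hj i hi h)
  · intro i hik
    by_cases hi0 : i = 0
    · subst hi0
      simpa [h0] using hcuv
    · beta_reduce
      rw [if_neg hi0, if_neg (by omega : i + 1 ≠ 0),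
        show i + 1 - 1 = (i - 1) + 1 by omega]
      exact hch (i - 1) (by omega)
  · beta_reduce
    rw [show m0 + 1 - 1 = m0 from rfl, if_neg (by omega : m0 ≠ 0), if_pos rfl, ← hm,
      show m0 = (m0 - 1) + 1 by omega]
    exact hch (m0 - 1) (by omega)
end

section
/- Let t be a balanced weighted tournament on X and let u, v ∈ X be distinct with t(u,v) > 1/2. Then there exist k ≥ 3 and distinct elements x_0, …, x_{k−1} of X with x_0 = u, x_1 = v, t(x_i, x_{i+1}) > 1/2 for all i < k−1, and t(x_{k−1}, x_0) > 1/2. -/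
open scoped BigOperators

variable {X : Type*}

/-!
Write `x ⟶ y` when `t x y > 1/2`. Balancedness forces the total weight leaving any `S ⊆ X` to be
exactly `|S| |Sᶜ| / 2`: the rows over `S` sum to `|S| (n - 1) / 2`, of which the pairs inside `S`
carry `|S| (|S| - 1) / 2`. So if the set `S` of points `⟶`-reachable from `v` missed `u`, every
edge leaving `S` would weigh at most `1/2` and `v → u` strictly less, which is impossible. Hence
`v` reaches `u`, and a shortest such path, preceded by `u ⟶ v`, is the required cycle.
-/

open Finset

section Paths

variable {α : Type*} {r : α → α → Prop} {a b : α}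

theorem Relation.ReflTransGen.exists_path (h : Relation.ReflTransGen r a b) :
    ∃ (n : ℕ) (f : ℕ → α), f 0 = a ∧ f n = b ∧ ∀ i < n, r (f i) (f (i + 1)) := by
  induction h with
  | refl => exact ⟨0, fun _ => a, rfl, rfl, by simp⟩
  | @tail _ d _ hcd ih =>
    obtain ⟨n, f, hf0, hfn, hf⟩ := ih
    refine ⟨n + 1, fun i => if i ≤ n then f i else d, by simpa, by simp, fun i hi => ?_⟩
    rcases Nat.lt_succ_iff_lt_or_eq.1 hi with hi | rfl
    · simpa [hi.le, Nat.succ_le_of_lt hi] using hf i hi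
    · simpa [hfn] using hcd

theorem Relation.ReflTransGen.exists_injOn_path (h : Relation.ReflTransGen r a b) :
    ∃ (n : ℕ) (f : ℕ → α), f 0 = a ∧ f n = b ∧ (∀ i < n, r (f i) (f (i + 1))) ∧
      Set.InjOn f (Set.Iic n) := by
  classical
  have hex := h.exists_path
  obtain ⟨f, hf0, hfn, hf⟩ := Nat.find_spec hex
  set n := Nat.find hex
  -- a repetition `f i = f j` could be cut out of a shortest path
  have hrep : ∀ i j, i < j → j ≤ n → f i ≠ f j := by
    intro i j hij hjn hfij
    have hshort := Nat.find_min' hex (m := n - (j - i))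
      ⟨fun m => if m ≤ i then f m else f (m + (j - i)), by simpa, ?_, ?_⟩
    · omega
    · dsimp only
      split_ifs with hle
      · rw [show n - (j - i) = i by omega, hfij, show j = n by omega, hfn]
      · rw [show n - (j - i) + (j - i) = n by omega, hfn]
    · intro m hm
      rcases lt_trichotomy m i with hmi | rfl | hmi
      · simpa [hmi.le, Nat.succ_le_of_lt hmi] using hf m (by omega)
      · simpa [hfij, show m + 1 + (j - m) = j + 1 by omega] using hf j (by omega)
      · simpa [show ¬ m ≤ i by omega, show ¬ m + 1 ≤ i by omega,
          show m + 1 + (j - i) = m + (j - i) + 1 by omega] using hf (m + (j - i)) (by omega)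
  refine ⟨n, f, hf0, hfn, hf, fun i hi j hj hfij => ?_⟩
  by_contra hne
  rcases Nat.lt_or_gt_of_ne hne with hij | hji
  exacts [hrep i j hij hj hfij, hrep j i hji hi hfij.symm]

end Paths

section Balanced

variable {t : X → X → ℝ}

theorem IsWeighted.add_swap (ht : IsWeighted t) {x y : X} (hxy : x ≠ y) : t x y + t y x = 1 := by
  linarith [(ht x y hxy).2.2]

theorem BalancedW.sum_erase [Fintype X] [DecidableEq X] (hbal : BalancedW t) (x : X) :
    ∑ y ∈ univ.erase x, t x y = ((Fintype.card X : ℝ) - 1) / 2 := by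
  rw [← hbal x, ← finsum_mem_coe_finset]
  congr 1
  ext
  simp

theorem IsWeighted.sum_sum_erase [DecidableEq X] (ht : IsWeighted t) (S : Finset X) :
    ∑ x ∈ S, ∑ y ∈ S.erase x, t x y = #S * (#S - 1 : ℝ) / 2 := by
  have hswap : ∑ x ∈ S, ∑ y ∈ S.erase x, t x y = ∑ x ∈ S, ∑ y ∈ S.erase x, t y x :=
    sum_comm' fun x y => by simp only [mem_erase]; tauto
  have hpair : ∑ x ∈ S, ∑ y ∈ S.erase x, (t x y + t y x) = #S * (#S - 1 : ℝ) := by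
    rw [sum_congr rfl fun x _ => sum_congr rfl fun y hy => ht.add_swap (ne_of_mem_erase hy).symm]
    simp only [sum_const, nsmul_eq_mul, mul_one,
      sum_congr rfl fun x hx => cast_card_erase_of_mem (R := ℝ) hx]
  simp only [sum_add_distrib] at hpair
  linarith

theorem BalancedW.sum_sum_compl [Fintype X] [DecidableEq X] (hbal : BalancedW t)
    (ht : IsWeighted t) (S : Finset X) : ∑ x ∈ S, ∑ y ∈ Sᶜ, t x y = #S * #Sᶜ / 2 := by
  have hrow : ∀ x ∈ S,
      ∑ y ∈ Sᶜ, t x y = ((Fintype.card X : ℝ) - 1) / 2 - ∑ y ∈ S.erase x, t x y := by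
    intro x hx
    have := sum_add_sum_compl S (t x)
    rw [← sum_erase_add _ _ hx, ← sum_erase_add _ _ (mem_univ x), hbal.sum_erase x] at this
    linarith
  rw [sum_congr rfl hrow, sum_sub_distrib, ht.sum_sum_erase, card_compl,
    Nat.cast_sub (card_le_univ S)]
  simp only [sum_const, nsmul_eq_mul]
  ring

theorem BalancedW.exists_half_lt_of_lt_half [Fintype X] (hbal : BalancedW t) (ht : IsWeighted t)
    {S : Finset X} {x y : X} (hx : x ∈ S) (hy : y ∉ S) (hxy : t x y < 1 / 2) :
    ∃ a ∈ S, ∃ b ∉ S, 1 / 2 < t a b := by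
  classical
  by_contra! hle
  have hlt : ∑ a ∈ S, ∑ b ∈ Sᶜ, t a b < ∑ a ∈ S, ∑ b ∈ Sᶜ, (1 / 2 : ℝ) :=
    sum_lt_sum (fun a ha => sum_le_sum fun b hb => hle a ha b (mem_compl.1 hb))
      ⟨x, hx, sum_lt_sum (fun b hb => hle x hx b (mem_compl.1 hb)) ⟨y, mem_compl.2 hy, hxy⟩⟩
  rw [hbal.sum_sum_compl ht] at hlt
  simp only [sum_const, nsmul_eq_mul] at hlt
  linarith

theorem BalancedW.reflTransGen_half_lt [Fintype X] (hbal : BalancedW t) (ht : IsWeighted t)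
    {u v : X} (huv : u ≠ v) (htuv : 1 / 2 < t u v) :
    Relation.ReflTransGen (fun x y => 1 / 2 < t x y) v u := by
  by_contra hvu
  classical
  obtain ⟨a, ha, b, hb, hab⟩ := hbal.exists_half_lt_of_lt_half ht
    (S := univ.filter (Relation.ReflTransGen (fun x y => 1 / 2 < t x y) v))
    (by simpa using Relation.ReflTransGen.refl) (by simpa using hvu) (by linarith [ht.add_swap huv])
  simp only [mem_filter, mem_univ, true_and] at ha hb
  exact hb (ha.tail hab)

end Balanced

theorem stmt12_general [Fintype X]
    (t : X → X → ℝ) (ht : IsWeighted t) (hbal : BalancedW t)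
    (u v : X) (huv : u ≠ v) (htuv : 1 / 2 < t u v) :
    ∃ k : ℕ, 3 ≤ k ∧ ∃ xs : ℕ → X,
      (∀ i < k, ∀ j < k, xs i = xs j → i = j) ∧
      xs 0 = u ∧ xs 1 = v ∧
      (∀ i, i + 1 < k → 1 / 2 < t (xs i) (xs (i + 1))) ∧
      1 / 2 < t (xs (k - 1)) (xs 0) := by
  obtain ⟨n, f, hf0, hfn, hf, hinj⟩ :=
    (hbal.reflTransGen_half_lt ht huv htuv).exists_injOn_path
  have hn : 2 ≤ n := by
    rcases n with _ | _ | n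
    · exact absurd (hf0.symm.trans hfn) huv.symm
    · have := hf 0 one_pos
      rw [hf0, hfn] at this
      linarith [ht.add_swap huv]
    · omega
  refine ⟨n + 1, by omega, fun i => if i = 0 then u else f (i - 1), ?_, by simp, by simp [hf0],
    ?_, ?_⟩
  · intro i hi j hj hij
    rcases i with _ | i <;> rcases j with _ | j <;>
      simp only [Nat.add_one_ne_zero, if_true, if_false, Nat.add_sub_cancel] at hij
    · rfl
    · have := hinj (Set.mem_Iic.2 le_rfl) (Set.mem_Iic.2 (by omega)) (hfn.trans hij)
      omega
    · have := hinj (Set.mem_Iic.2 (by omega)) (Set.mem_Iic.2 le_rfl) (hij.trans hfn.symm)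
      omega
    · rw [hinj (Set.mem_Iic.2 (by omega)) (Set.mem_Iic.2 (by omega)) hij]
  · rintro (_ | i) hi
    · simpa [hf0] using htuv
    · simpa using hf i (by omega)
  · simpa [hfn, show n ≠ 0 by omega, Nat.sub_add_cancel (by omega : 1 ≤ n)]
      using hf (n - 1) (by omega)

theorem stmt12 [Fintype X] (hcard : 3 ≤ Fintype.card X)
    (t : X → X → ℝ) (ht : IsWeighted t) (hbal : BalancedW t)
    (u v : X) (huv : u ≠ v) (htuv : 1 / 2 < t u v) :
    ∃ k : ℕ, 3 ≤ k ∧ ∃ xs : ℕ → X,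
      (∀ i < k, ∀ j < k, xs i = xs j → i = j) ∧
      xs 0 = u ∧ xs 1 = v ∧
      (∀ i, i + 1 < k → 1 / 2 < t (xs i) (xs (i + 1))) ∧
      1 / 2 < t (xs (k - 1)) (xs 0) :=
  stmt12_general t ht hbal u v huv htuv
end

section
/- Let t be a balanced weighted tournament on X. Then there exist m(*) ≥ 1, sequences x̄_0, …, x̄_{m(*)−1} of distinct elements of X (each of length at least 3), reals a_0, …, a_{m(*)−1} ∈ [0,1], reals r_0, …, r_{m(*)−1} ≥ 0 with Σ_{m < m(*)} r_m = 1, and a real s ≥ 1 such that, writing t* = Σ_{m < m(*)} r_m · t_{x̄_m, a_m}, one has t(u,v) − 1/2 = s · (t*(u,v) − 1/2) for all distinct u, v ∈ X. -/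
open scoped BigOperators

variable {X : Type*}

section Stmt13Aux

open Classical

variable {X : Type*}

noncomputable def trip13 (w0 w1 w2 : X) : ℕ → X :=
  fun i => if i = 0 then w0 else if i = 1 then w1 else w2

lemma ex3_13 (P : ℕ → Prop) : (∃ i < 3, P i) ↔ P 0 ∨ P 1 ∨ P 2 := by
  constructor
  · rintro ⟨i, hi, h⟩; interval_cases i <;> tauto
  · rintro (h | h | h) <;> [exact ⟨0, by omega, h⟩; exact ⟨1, by omega, h⟩; exact ⟨2, by omega, h⟩]

noncomputable def Ind13 (c : Prop) : ℝ := if c then 1 else 0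

lemma trip13_inj (w0 w1 w2 : X) (h01 : w0 ≠ w1) (h02 : w0 ≠ w2) (h12 : w1 ≠ w2) :
    ∀ i1 < 3, ∀ i2 < 3, trip13 w0 w1 w2 i1 = trip13 w0 w1 w2 i2 → i1 = i2 := by
  intro i1 h1 i2 h2 h
  interval_cases i1 <;> interval_cases i2 <;> simp_all [trip13]

lemma tCycle_trip13 (w0 w1 w2 : X) (a : ℝ) (u v : X) (huv : u ≠ v) :
    tCycle 3 (trip13 w0 w1 w2) a u v =
      if (u = w0 ∧ v = w1) ∨ (u = w1 ∧ v = w2) ∨ (u = w2 ∧ v = w0) then a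
      else if (v = w0 ∧ u = w1) ∨ (v = w1 ∧ u = w2) ∨ (v = w2 ∧ u = w0) then 1 - a
      else 1 / 2 := by
  have tr0 : trip13 w0 w1 w2 0 = w0 := rfl
  have tr1 : trip13 w0 w1 w2 1 = w1 := rfl
  have tr2 : trip13 w0 w1 w2 2 = w2 := rfl
  have key : ∀ p q : X, (∃ i < 3, p = trip13 w0 w1 w2 i ∧ q = trip13 w0 w1 w2 ((i + 1) % 3)) ↔
      ((p = w0 ∧ q = w1) ∨ (p = w1 ∧ q = w2) ∨ (p = w2 ∧ q = w0)) := by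
    intro p q
    rw [ex3_13]
    norm_num [tr0, tr1, tr2]
  simp only [tCycle, huv, if_false, key]

lemma cycDev13 (w0 w1 w2 : X) (h01 : w0 ≠ w1) (h02 : w0 ≠ w2) (h12 : w1 ≠ w2)
    (a : ℝ) (u v : X) (huv : u ≠ v) :
    tCycle 3 (trip13 w0 w1 w2) a u v - 1 / 2 =
      (a - 1 / 2) * (Ind13 (u = w0 ∧ v = w1) + Ind13 (u = w1 ∧ v = w2) + Ind13 (u = w2 ∧ v = w0)
        - Ind13 (v = w0 ∧ u = w1) - Ind13 (v = w1 ∧ u = w2) - Ind13 (v = w2 ∧ u = w0)) := by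
  rw [tCycle_trip13 _ _ _ _ _ _ huv]
  by_cases hE : (u = w0 ∧ v = w1) ∨ (u = w1 ∧ v = w2) ∨ (u = w2 ∧ v = w0)
  · rw [if_pos hE]
    rcases hE with ⟨rfl, rfl⟩ | ⟨rfl, rfl⟩ | ⟨rfl, rfl⟩ <;>
      simp [Ind13, h01, h02, h12, Ne.symm h01, Ne.symm h02, Ne.symm h12] <;> ring
  · rw [if_neg hE]
    by_cases hE' : (v = w0 ∧ u = w1) ∨ (v = w1 ∧ u = w2) ∨ (v = w2 ∧ u = w0)
    · rw [if_pos hE']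
      rcases hE' with ⟨rfl, rfl⟩ | ⟨rfl, rfl⟩ | ⟨rfl, rfl⟩ <;>
        simp [Ind13, h01, h02, h12, Ne.symm h01, Ne.symm h02, Ne.symm h12] <;> ring
    · rw [if_neg hE']
      have n1 : ¬(u = w0 ∧ v = w1) := fun h => hE (Or.inl h)
      have n2 : ¬(u = w1 ∧ v = w2) := fun h => hE (Or.inr (Or.inl h))
      have n3 : ¬(u = w2 ∧ v = w0) := fun h => hE (Or.inr (Or.inr h))
      have n4 : ¬(v = w0 ∧ u = w1) := fun h => hE' (Or.inl h)
      have n5 : ¬(v = w1 ∧ u = w2) := fun h => hE' (Or.inr (Or.inl h))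
      have n6 : ¬(v = w2 ∧ u = w0) := fun h => hE' (Or.inr (Or.inr h))
      simp [Ind13, n1, n2, n3, n4, n5, n6]

lemma H1_13 [Fintype X] (f : X → X → ℝ) (w : X) :
    ∑ p : X × X, f p.1 p.2 * Ind13 (w = p.1) = ∑ y, f w y := by
  rw [Fintype.sum_prod_type]
  simp [Ind13, mul_ite, Finset.sum_ite_eq]

lemma H2_13 [Fintype X] (f : X → X → ℝ) (w : X) :
    ∑ p : X × X, f p.1 p.2 * Ind13 (w = p.2) = ∑ x, f x w := by
  rw [Fintype.sum_prod_type_right]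
  simp [Ind13, mul_ite, Finset.sum_ite_eq]

lemma H3_13 [Fintype X] (f : X → X → ℝ) (w z : X) :
    ∑ p : X × X, f p.1 p.2 * Ind13 (w = p.1 ∧ z = p.2) = f w z := by
  rw [Fintype.sum_prod_type]
  simp [Ind13, mul_ite, ite_and, Finset.sum_ite_eq]

lemma HA_13 [Fintype X] (f : X → X → ℝ) (c : Prop) (w : X) :
    ∑ p : X × X, f p.1 p.2 * Ind13 (c ∧ w = p.1) = if c then ∑ y, f w y else 0 := by
  by_cases h : c
  · simp only [h, true_and, if_true, H1_13]
  · simp [Ind13, h]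

lemma HB_13 [Fintype X] (f : X → X → ℝ) (c : Prop) (w : X) :
    ∑ p : X × X, f p.1 p.2 * Ind13 (w = p.2 ∧ c) = if c then ∑ x, f x w else 0 := by
  by_cases h : c
  · simp only [h, and_true, if_true, H2_13]
  · simp [Ind13, h]

noncomputable def Fd13 (t : X → X → ℝ) (v0 x y : X) : ℝ :=
  if x = v0 ∨ y = v0 ∨ x = y then 0 else (t x y - 1 / 2) / 2

lemma Fd13_anti (t : X → X → ℝ) (ht : IsWeighted t) (v0 x y : X) :
    Fd13 t v0 x y = - Fd13 t v0 y x := by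
  rcases eq_or_ne x y with h | h
  · simp [Fd13, h]
  · have hyx := (ht x y h).2.2
    by_cases hx : x = v0 <;> by_cases hy : y = v0 <;>
      simp [Fd13, hx, hy, h, h.symm, hyx] <;> ring

lemma Fd13_bound (t : X → X → ℝ) (ht : IsWeighted t) (v0 x y : X) :
    |Fd13 t v0 x y| ≤ 1 / 4 := by
  unfold Fd13
  split_ifs with h
  · norm_num
  · push_neg at h
    obtain ⟨h1, h2, h3⟩ := h
    have := ht x y h3
    rw [abs_le]
    constructor <;> [linarith [this.1]; linarith [this.2.1]]

lemma balFin13 [Fintype X] (t : X → X → ℝ) (hbal : BalancedW t) (x : X) :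
    ∑ y ∈ Finset.univ.erase x, t x y = ((Fintype.card X : ℝ) - 1) / 2 := by
  have h := hbal x
  rwa [show {y : X | y ≠ x} = ↑(Finset.univ.erase x) by ext; simp,
    finsum_mem_coe_finset] at h

lemma rowFd13 [Fintype X] (t : X → X → ℝ) (ht : IsWeighted t) (hbal : BalancedW t)
    (v0 v : X) (hv : v ≠ v0) :
    ∑ y, Fd13 t v0 v y = (t v0 v - 1 / 2) / 2 := by
  have hcard : 1 ≤ Fintype.card X := Fintype.card_pos_iff.mpr ⟨v⟩
  have h1 : ∑ y, Fd13 t v0 v y = ∑ y ∈ (Finset.univ.erase v).erase v0, Fd13 t v0 v y := by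
    refine (Finset.sum_subset (Finset.subset_univ _) ?_).symm
    intro y _ hy
    simp only [Finset.mem_erase, Finset.mem_univ, and_true, not_and, not_not] at hy
    unfold Fd13
    rcases eq_or_ne y v0 with h | h
    · simp [h]
    · simp [hy h]
  have h2 : ∑ y ∈ (Finset.univ.erase v).erase v0, Fd13 t v0 v y
      = ∑ y ∈ (Finset.univ.erase v).erase v0, (t v y - 1 / 2) / 2 := by
    refine Finset.sum_congr rfl ?_
    intro y hy
    simp only [Finset.mem_erase, Finset.mem_univ, and_true] at hy
    unfold Fd13
    rw [if_neg]
    push_neg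
    exact ⟨hv, hy.1, fun h => hy.2 h.symm⟩
  have hv0mem : v0 ∈ Finset.univ.erase v := by simp [Ne.symm hv]
  have h3 : ∑ y ∈ (Finset.univ.erase v).erase v0, (t v y - 1 / 2) / 2
      = (∑ y ∈ Finset.univ.erase v, (t v y - 1 / 2) / 2) - (t v v0 - 1 / 2) / 2 :=
    Finset.sum_erase_eq_sub hv0mem
  have h4 : ∑ y ∈ Finset.univ.erase v, (t v y - 1 / 2) / 2 = 0 := by
    have hc : ((Finset.univ.erase v).card : ℝ) = (Fintype.card X : ℝ) - 1 := by
      rw [Finset.card_erase_of_mem (Finset.mem_univ v), Finset.card_univ,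
        Nat.cast_sub hcard]
      norm_num
    rw [← Finset.sum_div, Finset.sum_sub_distrib, Finset.sum_const, nsmul_eq_mul,
      balFin13 t hbal v, hc]
    ring
  have h5 := (ht v0 v (Ne.symm hv)).2.2
  rw [h1, h2, h3, h4]
  linarith

lemma colFd13 [Fintype X] (t : X → X → ℝ) (ht : IsWeighted t) (hbal : BalancedW t)
    (v0 u : X) (hu : u ≠ v0) :
    ∑ x, Fd13 t v0 x u = (t u v0 - 1 / 2) / 2 := by
  have h5 := (ht u v0 hu).2.2
  calc ∑ x, Fd13 t v0 x u = ∑ x, -Fd13 t v0 u x :=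
        Finset.sum_congr rfl (fun x _ => Fd13_anti t ht v0 x u)
    _ = -∑ x, Fd13 t v0 u x := by rw [Finset.sum_neg_distrib]
    _ = -((t v0 u - 1 / 2) / 2) := by rw [rowFd13 t ht hbal v0 u hu]
    _ = (t u v0 - 1 / 2) / 2 := by rw [h5]; ring

lemma sumDev13 [Fintype X] (t : X → X → ℝ) (ht : IsWeighted t) (hbal : BalancedW t)
    (v0 u v : X) (huv : u ≠ v) :
    ∑ p : X × X, (Fd13 t v0 p.1 p.2) *
      (Ind13 (u = v0 ∧ v = p.1) + Ind13 (u = p.1 ∧ v = p.2) + Ind13 (u = p.2 ∧ v = v0)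
        - Ind13 (v = v0 ∧ u = p.1) - Ind13 (v = p.1 ∧ u = p.2) - Ind13 (v = p.2 ∧ u = v0))
      = t u v - 1 / 2 := by
  simp only [mul_add, mul_sub, Finset.sum_add_distrib, Finset.sum_sub_distrib]
  rw [HA_13, H3_13, HB_13, HA_13, H3_13, HB_13]
  by_cases hu : u = v0
  · have hv : v ≠ v0 := fun h => huv (hu.trans h.symm)
    have e1 : Fd13 t v0 v0 v = 0 := by simp [Fd13]
    have e2 : Fd13 t v0 v v0 = 0 := by simp [Fd13]
    simp only [hu]
    rw [if_neg hv, if_neg hv]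
    simp only [if_true]
    rw [e1, e2, rowFd13 t ht hbal v0 v hv, colFd13 t ht hbal v0 v hv]
    have h5 := (ht v0 v (Ne.symm hv)).2.2
    rw [h5]; ring
  · by_cases hv : v = v0
    · have e1 : Fd13 t v0 u v0 = 0 := by simp [Fd13]
      have e2 : Fd13 t v0 v0 u = 0 := by simp [Fd13]
      simp only [hv]
      rw [if_neg hu, if_neg hu]
      simp only [if_true]
      rw [e1, e2, rowFd13 t ht hbal v0 u hu, colFd13 t ht hbal v0 u hu]
      have h5 := (ht u v0 hu).2.2
      rw [h5]; ring
    · have e1 : Fd13 t v0 u v = (t u v - 1 / 2) / 2 := by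
        unfold Fd13; rw [if_neg]; push_neg; exact ⟨hu, hv, huv⟩
      have e2 : Fd13 t v0 v u = (t v u - 1 / 2) / 2 := by
        unfold Fd13; rw [if_neg]; push_neg; exact ⟨hv, hu, Ne.symm huv⟩
      have h5 := (ht u v huv).2.2
      rw [if_neg hu, if_neg hv, if_neg hv, if_neg hu, e1, e2, h5]
      ring

noncomputable def xsP13 (v0 p1 p2 : X) (p : X × X) : ℕ → X :=
  if p.1 ≠ v0 ∧ p.2 ≠ v0 ∧ p.1 ≠ p.2 then trip13 v0 p.1 p.2 else trip13 v0 p1 p2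

noncomputable def aP13 (t : X → X → ℝ) (v0 : X) (p : X × X) : ℝ :=
  1 / 2 + Fd13 t v0 p.1 p.2

end Stmt13Aux

theorem stmt13 [Fintype X] (hcard : 3 ≤ Fintype.card X)
    (t : X → X → ℝ) (ht : IsWeighted t) (hbal : BalancedW t) :
    ∃ m : ℕ, 1 ≤ m ∧
      ∃ (k : Fin m → ℕ) (xs : Fin m → ℕ → X) (a r : Fin m → ℝ) (s : ℝ),
        (∀ j, 3 ≤ k j) ∧
        (∀ j, ∀ i1 < k j, ∀ i2 < k j, xs j i1 = xs j i2 → i1 = i2) ∧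
        (∀ j, 0 ≤ a j ∧ a j ≤ 1) ∧
        (∀ j, 0 ≤ r j) ∧ (∑ j, r j) = 1 ∧ 1 ≤ s ∧
        ∀ u v : X, u ≠ v →
          t u v - 1 / 2 =
            s * ((∑ j, r j * tCycle (k j) (xs j) (a j) u v) - 1 / 2) := by
  classical
  obtain ⟨e3⟩ : Nonempty (Fin 3 ↪ X) :=
    Function.Embedding.nonempty_of_card_le (by simpa using hcard)
  have h01 : e3 0 ≠ e3 1 := fun h => by simpa using e3.injective h
  have h02 : e3 0 ≠ e3 2 := fun h => by simpa using e3.injective h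
  have h12 : e3 1 ≠ e3 2 := fun h => by simpa using e3.injective h
  set n := Fintype.card X with hn
  have hnR : (3:ℝ) ≤ (n:ℝ) := by exact_mod_cast hcard
  have hNne : ((n:ℝ) * n) ≠ 0 := by nlinarith
  let e : Fin (n * n) ≃ X × X :=
    (finCongr (Fintype.card_prod X X)).symm.trans (Fintype.equivFin (X × X)).symm
  refine ⟨n * n, by nlinarith [hcard], fun _ => 3,
    fun j => xsP13 (e3 0) (e3 1) (e3 2) (e j), fun j => aP13 t (e3 0) (e j),
    fun _ => 1 / ((n:ℝ) * n), (n:ℝ) * n,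
    fun _ => le_refl 3, ?_, ?_, fun _ => by positivity, ?_, by nlinarith, ?_⟩
  · intro j
    show ∀ i1 < 3, ∀ i2 < 3,
      xsP13 (e3 0) (e3 1) (e3 2) (e j) i1 = xsP13 (e3 0) (e3 1) (e3 2) (e j) i2 → i1 = i2
    unfold xsP13
    split_ifs with h
    · exact trip13_inj _ _ _ (Ne.symm h.1) (Ne.symm h.2.1) h.2.2
    · exact trip13_inj _ _ _ h01 h02 h12
  · intro j
    have hb := Fd13_bound t ht (e3 0) (e j).1 (e j).2
    rw [abs_le] at hb
    unfold aP13
    constructor <;> linarith [hb.1, hb.2]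
  · rw [Finset.sum_const, Finset.card_univ, Fintype.card_fin, nsmul_eq_mul]
    push_cast
    field_simp
  · intro u v huv
    have perp : ∀ p : X × X,
        tCycle 3 (xsP13 (e3 0) (e3 1) (e3 2) p) (aP13 t (e3 0) p) u v - 1 / 2
          = Fd13 t (e3 0) p.1 p.2 *
            (Ind13 (u = e3 0 ∧ v = p.1) + Ind13 (u = p.1 ∧ v = p.2) + Ind13 (u = p.2 ∧ v = e3 0)
              - Ind13 (v = e3 0 ∧ u = p.1) - Ind13 (v = p.1 ∧ u = p.2)
              - Ind13 (v = p.2 ∧ u = e3 0)) := by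
      intro p
      by_cases hval : p.1 ≠ e3 0 ∧ p.2 ≠ e3 0 ∧ p.1 ≠ p.2
      · rw [show xsP13 (e3 0) (e3 1) (e3 2) p = trip13 (e3 0) p.1 p.2 from if_pos hval,
          cycDev13 (e3 0) p.1 p.2 (Ne.symm hval.1) (Ne.symm hval.2.1) hval.2.2 _ _ _ huv]
        have ha : aP13 t (e3 0) p - 1 / 2 = Fd13 t (e3 0) p.1 p.2 := by unfold aP13; ring
        rw [ha]
      · have hFd : Fd13 t (e3 0) p.1 p.2 = 0 := by
          unfold Fd13; rw [if_pos (by tauto)]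
        rw [show xsP13 (e3 0) (e3 1) (e3 2) p = trip13 (e3 0) (e3 1) (e3 2) from if_neg hval,
          cycDev13 (e3 0) (e3 1) (e3 2) h01 h02 h12 _ _ _ huv, hFd]
        have ha : aP13 t (e3 0) p - 1 / 2 = 0 := by unfold aP13; rw [hFd]; ring
        rw [ha, zero_mul, zero_mul]
    have key : ∑ p : X × X,
        (tCycle 3 (xsP13 (e3 0) (e3 1) (e3 2) p) (aP13 t (e3 0) p) u v - 1 / 2)
        = t u v - 1 / 2 := by
      rw [Finset.sum_congr rfl (fun p _ => perp p)]
      exact sumDev13 t ht hbal (e3 0) u v huv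
    have hS : ∑ j : Fin (n * n),
        (tCycle 3 (xsP13 (e3 0) (e3 1) (e3 2) (e j)) (aP13 t (e3 0) (e j)) u v - 1 / 2)
        = t u v - 1 / 2 := by
      rw [Equiv.sum_comp e
        (fun p => tCycle 3 (xsP13 (e3 0) (e3 1) (e3 2) p) (aP13 t (e3 0) p) u v - 1 / 2)]
      exact key
    have hS2 : ∑ j : Fin (n * n),
        tCycle 3 (xsP13 (e3 0) (e3 1) (e3 2) (e j)) (aP13 t (e3 0) (e j)) u v
        = (t u v - 1 / 2) + (n:ℝ) * n / 2 := by
      rw [Finset.sum_sub_distrib, Finset.sum_const, Finset.card_univ, Fintype.card_fin,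
        nsmul_eq_mul] at hS
      push_cast at hS ⊢
      linarith
    rw [← Finset.mul_sum, hS2]
    field_simp
    ring
end

section
/- Let X be a finite set, E a set of ordered pairs of distinct elements of X, and w : E → ℝ with w(e) > 0 for every e ∈ E, such that for every x ∈ X: Σ{w((u,x)) : (u,x) ∈ E} = Σ{w((x,v)) : (x,v) ∈ E}. Then there exist finitely many simple directed cycles C_0, …, C_{m−1} with all edges in E, and positive reals b_0, …, b_{m−1}, such that for every e ∈ E: w(e) = Σ{b_i : i < m, e is an edge of C_i}. -/
open scoped BigOperators

variable {X : Type*}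

/-!
If a circulation is positive on its support `E`, every vertex entered by an edge of `E` is also
left by one. A successor map choosing such outgoing edges has a periodic orbit on the finite set
of tails of `E`, and that orbit is a simple cycle in `E`. Subtracting the minimum weight of `w` on
this cycle times the cycle's indicator leaves a circulation that is still nonnegative on `E` and
vanishes on at least one more edge, so induction on the support concludes.
-/

open Finset Function

theorem Finset.sum_range_succ_mod {M : Type*} [AddCommMonoid M] (f : ℕ → M) (n : ℕ) :
    ∑ j ∈ range n, f ((j + 1) % n) = ∑ j ∈ range n, f j := by
  cases n with
  | zero => rfl
  | succ n =>
    rw [sum_range_succ, Nat.mod_self, sum_range_succ' f]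
    exact congrArg (· + f 0) <| sum_congr rfl fun j hj =>
      by rw [Nat.mod_eq_of_lt (Nat.succ_lt_succ (mem_range.1 hj))]

theorem Set.MapsTo.exists_iterate_mem_periodicPts {α : Type*} {g : α → α} {S : Set α}
    (hS : S.Finite) (hg : Set.MapsTo g S S) {x : α} (hx : x ∈ S) :
    ∃ n, g^[n] x ∈ periodicPts g := by
  obtain ⟨m, n, hmn, h⟩ :=
    hS.exists_lt_map_eq_of_forall_mem (f := (g^[·] x)) fun n => hg.iterate n hx
  refine ⟨m, mk_mem_periodicPts (Nat.sub_pos_of_lt hmn) ?_⟩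
  rw [IsPeriodicPt, IsFixedPt, ← iterate_add_apply, Nat.sub_add_cancel hmn.le, h]

structure SimpleCycle (X : Type*) where
  len : ℕ
  vert : ℕ → X
  two_le_len : 2 ≤ len
  injOn_vert : Set.InjOn vert (Set.Iio len)

namespace SimpleCycle

def edge (c : SimpleCycle X) (j : ℕ) : X × X :=
  (c.vert j, c.vert ((j + 1) % c.len))

noncomputable def ofPeriodicPt (g : X → X) (p : X) (hp : 2 ≤ minimalPeriod g p) :
    SimpleCycle X where
  len := minimalPeriod g p
  vert j := g^[j] p
  two_le_len := hp
  injOn_vert := iterate_injOn_Iio_minimalPeriod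

theorem ofPeriodicPt_edge (g : X → X) (p : X) (hp : 2 ≤ minimalPeriod g p) (j : ℕ) :
    (ofPeriodicPt g p hp).edge j = (g^[j] p, g (g^[j] p)) := by
  simp only [edge, ofPeriodicPt, iterate_mod_minimalPeriod_eq, iterate_succ_apply']

variable [DecidableEq X] (c : SimpleCycle X)

def edges : Finset (X × X) :=
  (range c.len).image c.edge

theorem mem_edges {e : X × X} : e ∈ c.edges ↔ ∃ j < c.len, e = c.edge j := by
  simp only [edges, mem_image, mem_range, eq_comm]

theorem edges_nonempty : c.edges.Nonempty :=
  (nonempty_range_iff.2 (by have := c.two_le_len; omega)).image _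

theorem sum_edges {M : Type*} [AddCommMonoid M] (f : X × X → M) :
    ∑ e ∈ c.edges, f e = ∑ j ∈ range c.len, f (c.edge j) :=
  sum_image fun _ hi _ hj h =>
    c.injOn_vert (by simpa using hi) (by simpa using hj) (congrArg Prod.fst h)

end SimpleCycle

section Circulation

variable [DecidableEq X] {M : Type*}

def IsCirculation [AddCommMonoid M] (E : Finset (X × X)) (w : X × X → M) : Prop :=
  ∀ x, ∑ e ∈ E with e.2 = x, w e = ∑ e ∈ E with e.1 = x, w e

section AddCommMonoid

variable [AddCommMonoid M] {E E' : Finset (X × X)} {w v : X × X → M}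

theorem IsCirculation.congr (h : IsCirculation E w) (hwv : ∀ e ∈ E, w e = v e) :
    IsCirculation E v := fun x => by
  rw [← sum_congr rfl fun e he => hwv e (mem_filter.1 he).1,
    ← sum_congr rfl fun e he => hwv e (mem_filter.1 he).1, h x]

theorem isCirculation_iff_of_subset (hE : E' ⊆ E) (hw : ∀ e ∈ E, e ∉ E' → w e = 0) :
    IsCirculation E' w ↔ IsCirculation E w := by
  have hsum (p : X × X → Prop) [DecidablePred p] :
      ∑ e ∈ E' with p e, w e = ∑ e ∈ E with p e, w e :=
    sum_subset (filter_subset_filter _ hE) fun e he he' =>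
      hw e (mem_filter.1 he).1 fun h => he' (mem_filter.2 ⟨h, (mem_filter.1 he).2⟩)
  simp only [IsCirculation, hsum]

theorem SimpleCycle.isCirculation_edges (c : SimpleCycle X) (b : M) :
    IsCirculation c.edges fun _ => b := fun x => by
  simp only [sum_filter, c.sum_edges, SimpleCycle.edge]
  exact sum_range_succ_mod (fun j => if c.vert j = x then b else 0) c.len

theorem SimpleCycle.isCirculation_indicator {c : SimpleCycle X} (hc : c.edges ⊆ E) (b : M) :
    IsCirculation E fun e => if e ∈ c.edges then b else 0 :=
  (isCirculation_iff_of_subset hc fun _ _ he => if_neg he).1 <|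
    (c.isCirculation_edges b).congr fun _ he => (if_pos he).symm

end AddCommMonoid

theorem IsCirculation.sub [AddCommGroup M] {E : Finset (X × X)} {w v : X × X → M}
    (hw : IsCirculation E w) (hv : IsCirculation E v) : IsCirculation E (w - v) := fun x => by
  simp only [Pi.sub_apply, sum_sub_distrib, hw x, hv x]

end Circulation

theorem SimpleCycle.exists_edges_subset [DecidableEq X] {E : Finset (X × X)}
    (hE : ∀ e ∈ E, e.1 ≠ e.2) (hne : E.Nonempty) (hout : ∀ e ∈ E, ∃ y, (e.2, y) ∈ E) :
    ∃ c : SimpleCycle X, c.edges ⊆ E := by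
  obtain ⟨e₀, he₀⟩ := hne
  set S : Set X := {x | ∃ y, (x, y) ∈ E}
  have hS : S.Finite := (E.image Prod.fst).finite_toSet.subset fun x ⟨y, hxy⟩ =>
    mem_coe.2 (mem_image.2 ⟨(x, y), hxy, rfl⟩)
  have : Nonempty X := ⟨e₀.1⟩
  choose! g hg using show ∀ x ∈ S, ∃ y, (x, y) ∈ E from fun _ hx => hx
  have hgS : Set.MapsTo g S S := fun x hx => hout _ (hg x hx)
  obtain ⟨n, hn⟩ := hgS.exists_iterate_mem_periodicPts hS (x := e₀.1) ⟨e₀.2, he₀⟩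
  set p := g^[n] e₀.1
  have hpS : p ∈ S := hgS.iterate n ⟨e₀.2, he₀⟩
  have hp : 2 ≤ minimalPeriod g p := by
    have hpos := minimalPeriod_pos_of_mem_periodicPts hn
    have hne1 : minimalPeriod g p ≠ 1 := fun h1 =>
      hE _ (hg p hpS) (minimalPeriod_eq_one_iff_isFixedPt.1 h1).symm
    omega
  refine ⟨SimpleCycle.ofPeriodicPt g p hp, fun e he => ?_⟩
  obtain ⟨j, -, rfl⟩ := (SimpleCycle.mem_edges _).1 he
  rw [SimpleCycle.ofPeriodicPt_edge]
  exact hg _ (hgS.iterate j hpS)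

section Decomposition

variable [DecidableEq X] {M : Type*}

section Preorder

variable [AddCommMonoid M] [Preorder M] {E E' : Finset (X × X)} {w : X × X → M}

def HasCycleDecomposition (E : Finset (X × X)) (w : X × X → M) : Prop :=
  ∃ (m : ℕ) (c : Fin m → SimpleCycle X) (b : Fin m → M),
    (∀ i, (c i).edges ⊆ E) ∧ (∀ i, 0 < b i) ∧
      ∀ e ∈ E, w e = ∑ i, if e ∈ (c i).edges then b i else 0

theorem hasCycleDecomposition_empty (w : X × X → M) : HasCycleDecomposition ∅ w :=
  ⟨0, Fin.elim0, Fin.elim0, fun i => i.elim0, fun i => i.elim0,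
    fun _ he => absurd he (notMem_empty _)⟩

theorem HasCycleDecomposition.mono (h : HasCycleDecomposition E' w) (hE : E' ⊆ E)
    (hw : ∀ e ∈ E, e ∉ E' → w e = 0) : HasCycleDecomposition E w := by
  obtain ⟨m, c, b, hc, hb, hsum⟩ := h
  refine ⟨m, c, b, fun i => (hc i).trans hE, hb, fun e he => ?_⟩
  by_cases he' : e ∈ E'
  · exact hsum e he'
  · rw [hw e he he', eq_comm]
    exact sum_eq_zero fun i _ => if_neg fun hei => he' (hc i hei)

theorem HasCycleDecomposition.add_cycle (h : HasCycleDecomposition E w) {c : SimpleCycle X}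
    (hc : c.edges ⊆ E) {b : M} (hb : 0 < b) :
    HasCycleDecomposition E fun e => w e + if e ∈ c.edges then b else 0 := by
  obtain ⟨m, cs, bs, hcs, hbs, hsum⟩ := h
  refine ⟨m + 1, Fin.cons c cs, Fin.cons b bs, Fin.cases hc hcs, Fin.cases hb hbs,
    fun e he => ?_⟩
  simp only [Fin.sum_univ_succ, Fin.cons_zero, Fin.cons_succ, hsum e he, add_comm]

end Preorder

variable [AddCommGroup M] [LinearOrder M] [IsOrderedAddMonoid M] {E : Finset (X × X)}
  {w : X × X → M}

theorem IsCirculation.exists_out (h : IsCirculation E w) (hw : ∀ e ∈ E, 0 < w e)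
    {e : X × X} (he : e ∈ E) : ∃ y, (e.2, y) ∈ E := by
  have hin : 0 < ∑ e' ∈ E with e'.2 = e.2, w e' :=
    sum_pos (fun e' he' => hw e' (mem_filter.1 he').1) ⟨e, mem_filter.2 ⟨he, rfl⟩⟩
  rw [h e.2] at hin
  obtain ⟨e', he'⟩ := nonempty_of_sum_ne_zero hin.ne'
  rw [mem_filter] at he'
  exact ⟨e'.2, he'.2 ▸ he'.1⟩

theorem IsCirculation.hasCycleDecomposition (hE : ∀ e ∈ E, e.1 ≠ e.2)
    (hw : ∀ e ∈ E, 0 < w e) (h : IsCirculation E w) : HasCycleDecomposition E w := by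
  induction E using Finset.strongInduction generalizing w with
  | H E ih =>
  rcases E.eq_empty_or_nonempty with rfl | hne
  · exact hasCycleDecomposition_empty w
  obtain ⟨c, hc⟩ := SimpleCycle.exists_edges_subset hE hne fun e he => h.exists_out hw he
  obtain ⟨e₀, he₀, hmin⟩ := c.edges.exists_min_image w c.edges_nonempty
  set w' : X × X → M := fun e => w e - if e ∈ c.edges then w e₀ else 0
  have hw' : ∀ e ∈ E, 0 ≤ w' e := fun e he => by
    by_cases hec : e ∈ c.edges
    · simpa [w', hec] using hmin e hec
    · simpa [w', hec] using (hw e he).le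
  set E' := E.filter fun e => 0 < w' e
  have hE' : E' ⊂ E := filter_ssubset.2 ⟨e₀, hc he₀, by simp [w', he₀]⟩
  have hzero : ∀ e ∈ E, e ∉ E' → w' e = 0 := fun e he he' =>
    le_antisymm (not_lt.1 fun hpos => he' (mem_filter.2 ⟨he, hpos⟩)) (hw' e he)
  have hcirc' : IsCirculation E' w' := (isCirculation_iff_of_subset (filter_subset _ _) hzero).2
    (h.sub (SimpleCycle.isCirculation_indicator hc (w e₀)))
  have hdec := ((ih E' hE' (fun e he => hE e (hE'.subset he)) (fun e he => (mem_filter.1 he).2)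
    hcirc').mono (filter_subset _ _) hzero).add_cycle hc (hw e₀ (hc he₀))
  simpa only [w', sub_add_cancel] using hdec

end Decomposition

theorem stmt14_general [DecidableEq X]
    (E : Finset (X × X)) (hE : ∀ e ∈ E, e.1 ≠ e.2)
    (w : X × X → ℝ) (hw : ∀ e ∈ E, 0 < w e)
    (hbal : ∀ x : X,
      ∑ e ∈ E.filter (fun e => e.2 = x), w e = ∑ e ∈ E.filter (fun e => e.1 = x), w e) :
    ∃ (m : ℕ) (k : Fin m → ℕ) (xs : Fin m → ℕ → X) (b : Fin m → ℝ),
      (∀ i, 2 ≤ k i) ∧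
      (∀ i, ∀ j1 < k i, ∀ j2 < k i, xs i j1 = xs i j2 → j1 = j2) ∧
      (∀ i, ∀ j < k i, (xs i j, xs i ((j + 1) % k i)) ∈ E) ∧
      (∀ i, 0 < b i) ∧
      ∀ e ∈ E, w e =
        ∑ᶠ i ∈ {i : Fin m | ∃ j < k i, e = (xs i j, xs i ((j + 1) % k i))}, b i := by
  have hcirc : IsCirculation E w := hbal
  obtain ⟨m, c, b, hc, hb, hsum⟩ := hcirc.hasCycleDecomposition hE hw
  refine ⟨m, fun i => (c i).len, fun i => (c i).vert, b, fun i => (c i).two_le_len,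
    fun i _ hj₁ _ hj₂ h => (c i).injOn_vert hj₁ hj₂ h,
    fun i j hj => hc i (((c i).mem_edges).2 ⟨j, hj, rfl⟩), hb, fun e he => ?_⟩
  have hS : {i : Fin m | ∃ j < (c i).len, e = ((c i).vert j, (c i).vert ((j + 1) % (c i).len))} =
      ↑(univ.filter fun i => e ∈ (c i).edges) := by
    ext i
    simp only [Set.mem_ofPred_eq, coe_filter, mem_univ, true_and, SimpleCycle.mem_edges,
      SimpleCycle.edge]
  rw [hsum e he, ← sum_filter, ← finsum_mem_coe_finset, ← hS]

theorem stmt14 [Fintype X] [DecidableEq X]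
    (E : Finset (X × X)) (hE : ∀ e ∈ E, e.1 ≠ e.2)
    (w : X × X → ℝ) (hw : ∀ e ∈ E, 0 < w e)
    (hbal : ∀ x : X,
      ∑ e ∈ E.filter (fun e => e.2 = x), w e = ∑ e ∈ E.filter (fun e => e.1 = x), w e) :
    ∃ (m : ℕ) (k : Fin m → ℕ) (xs : Fin m → ℕ → X) (b : Fin m → ℝ),
      (∀ i, 2 ≤ k i) ∧
      (∀ i, ∀ j1 < k i, ∀ j2 < k i, xs i j1 = xs i j2 → j1 = j2) ∧
      (∀ i, ∀ j < k i, (xs i j, xs i ((j + 1) % k i)) ∈ E) ∧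
      (∀ i, 0 < b i) ∧
      ∀ e ∈ E, w e =
        ∑ᶠ i ∈ {i : Fin m | ∃ j < k i, e = (xs i j, xs i ((j + 1) % k i))}, b i :=
  stmt14_general E hE w hw hbal
end
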